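/- arXiv:2508.21158 — 5 statements merged into one kernel-verified Lean document; each statement's English description precedes it below -/
import Mathlib

section
/- Let d ≥ 1 be an integer, α ∈ (0,2], and r > 0. Let D ⊆ ℝ^d be a nonempty open set with nonempty complement whose inradius R_D := sup_{x∈D} dist(x, Dᶜ) is finite, and which satisfies the uniform exterior ball condition at scale r: for every x ∈ D there exists p ∈ ℝ^d with the open ball B(p,r) contained in Dᶜ and dist(x,p) ≤ dist(x, Dᶜ) + r. Then for every measurable function u : ℝ^d → ℝ vanishing outside D, one has ∫_{ℝ^d} ∫_{ℝ^d} |u(x) − u(y)|² / ‖x − y‖^{d+α} dx dy ≥ (ω_d r^d / (R_D + 2r)^{d+α}) · ∫_{ℝ^d} |u(x)|² dx, where ω_d r^d denotes the Lebesgue measure of a Euclidean ball of radius r in ℝ^d and both sides are Lebesgue integrals with values in [0,∞]. -/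
open MeasureTheory Metric Set ENNReal

/-- Gagliardo--Slobodeckii seminorm squared on `ℝ^d` with exponent `d + α`. -/
noncomputable def gagliardo (d : ℕ) (α : ℝ) (u : EuclideanSpace ℝ (Fin d) → ℝ) : ℝ≥0∞ :=
  ∫⁻ x, ∫⁻ y, ENNReal.ofReal (|u x - u y| ^ 2 / ‖x - y‖ ^ ((d : ℝ) + α))

/-- Squared `L²` norm. -/
noncomputable def l2sq (d : ℕ) (u : EuclideanSpace ℝ (Fin d) → ℝ) : ℝ≥0∞ :=
  ∫⁻ x, ENNReal.ofReal (|u x| ^ 2)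

/-- The inradius of a set: `sup_{x ∈ D} dist(x, Dᶜ)`. -/
noncomputable def inradius {E : Type*} [PseudoMetricSpace E] (D : Set E) : ℝ :=
  sSup ((fun x => Metric.infDist x Dᶜ) '' D)

theorem stmt0 (d : ℕ) (hd : 1 ≤ d) (α : ℝ) (hα : α ∈ Set.Ioc (0:ℝ) 2) (r : ℝ) (hr : 0 < r)
    (D : Set (EuclideanSpace ℝ (Fin d))) (hopen : IsOpen D) (hne : D.Nonempty)
    (hcne : Dᶜ.Nonempty)
    (hbdd : BddAbove ((fun x => Metric.infDist x Dᶜ) '' D))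
    (hext : ∀ x ∈ D, ∃ p : EuclideanSpace ℝ (Fin d),
      Metric.ball p r ⊆ Dᶜ ∧ dist x p ≤ Metric.infDist x Dᶜ + r)
    (u : EuclideanSpace ℝ (Fin d) → ℝ) (hu : Measurable u) (hu0 : ∀ x ∉ D, u x = 0) :
    (volume (Metric.ball (0 : EuclideanSpace ℝ (Fin d)) r) /
        ENNReal.ofReal ((inradius D + 2 * r) ^ ((d : ℝ) + α))) * l2sq d u
      ≤ gagliardo d α u := by
  obtain ⟨hα0, hα2⟩ := hα
  have hexp : (0:ℝ) ≤ (d:ℝ) + α := by positivity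
  have hRx : ∀ x ∈ D, Metric.infDist x Dᶜ ≤ inradius D := fun x hx =>
    le_csSup hbdd ⟨x, hx, rfl⟩
  obtain ⟨x0, hx0⟩ := hne
  have hR0 : 0 ≤ inradius D := le_trans Metric.infDist_nonneg (hRx x0 hx0)
  have hRr : 0 < inradius D + 2 * r := by linarith
  have hC0 : 0 < (inradius D + 2 * r) ^ ((d:ℝ) + α) := Real.rpow_pos_of_pos hRr _
  set C := (inradius D + 2 * r) ^ ((d:ℝ) + α) with hCdef
  set V := volume (Metric.ball (0 : EuclideanSpace ℝ (Fin d)) r) with hV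
  have hmeas : Measurable fun x => ENNReal.ofReal (|u x| ^ 2) := by
    exact ((hu.abs.pow_const 2)).ennreal_ofReal
  have key : ∀ x, (V / ENNReal.ofReal C) * ENNReal.ofReal (|u x| ^ 2)
      ≤ ∫⁻ y, ENNReal.ofReal (|u x - u y| ^ 2 / ‖x - y‖ ^ ((d : ℝ) + α)) := by
    intro x
    by_cases hux : u x = 0
    · simp [hux]
    · have hxD : x ∈ D := by by_contra h; exact hux (hu0 x h)
      obtain ⟨p, hpball, hpd⟩ := hext x hxD
      have hlow : ∀ y ∈ Metric.ball p r,
          ENNReal.ofReal (|u x| ^ 2 / C)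
            ≤ ENNReal.ofReal (|u x - u y| ^ 2 / ‖x - y‖ ^ ((d : ℝ) + α)) := by
        intro y hy
        have hyc : y ∈ Dᶜ := hpball hy
        have huy : u y = 0 := hu0 y hyc
        have hxy : x ≠ y := fun h => hyc (h ▸ hxD)
        have hnorm_pos : 0 < ‖x - y‖ := by
          rw [norm_sub_pos_iff]; exact hxy
        have hnorm_le : ‖x - y‖ ≤ inradius D + 2 * r := by
          rw [← dist_eq_norm]
          have h1 : dist x y ≤ dist x p + dist p y := dist_triangle x p y
          have h2 : dist p y < r := by rw [dist_comm]; exact mem_ball.mp hy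
          have h3 := hRx x hxD
          linarith
        have hrp_pos : 0 < ‖x - y‖ ^ ((d:ℝ) + α) := Real.rpow_pos_of_pos hnorm_pos _
        have hrp : ‖x - y‖ ^ ((d:ℝ) + α) ≤ C :=
          Real.rpow_le_rpow hnorm_pos.le hnorm_le hexp
        apply ENNReal.ofReal_le_ofReal
        rw [huy, sub_zero]
        exact div_le_div_of_nonneg_left (by positivity) hrp_pos hrp
      calc (V / ENNReal.ofReal C) * ENNReal.ofReal (|u x| ^ 2)
          = V * ENNReal.ofReal (|u x| ^ 2 / C) := by
            rw [ENNReal.ofReal_div_of_pos hC0, div_eq_mul_inv, div_eq_mul_inv,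
              mul_right_comm, mul_assoc]
        _ = volume (Metric.ball p r) * ENNReal.ofReal (|u x| ^ 2 / C) := by
            rw [hV, ← Measure.addHaar_ball_center volume p]
        _ = ∫⁻ y in Metric.ball p r, ENNReal.ofReal (|u x| ^ 2 / C) := by
            rw [setLIntegral_const, mul_comm]
        _ ≤ ∫⁻ y in Metric.ball p r,
              ENNReal.ofReal (|u x - u y| ^ 2 / ‖x - y‖ ^ ((d : ℝ) + α)) :=
            setLIntegral_mono' measurableSet_ball hlow
        _ ≤ ∫⁻ y, ENNReal.ofReal (|u x - u y| ^ 2 / ‖x - y‖ ^ ((d : ℝ) + α)) :=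
            setLIntegral_le_lintegral _ _
  calc (V / ENNReal.ofReal C) * l2sq d u
      = ∫⁻ x, (V / ENNReal.ofReal C) * ENNReal.ofReal (|u x| ^ 2) :=
        (lintegral_const_mul _ hmeas).symm
    _ ≤ gagliardo d α u := lintegral_mono key
end

section
/- Let d ≥ 1 be an integer, α ∈ (0,2], and r > 0. Let D ⊆ ℝ^d be a nonempty open set with nonempty complement whose inradius R_D := sup_{x∈D} dist(x, Dᶜ) is finite, and which satisfies the uniform exterior ball condition at scale r. Then the variational bottom of the spectrum satisfies λ(D) ≥ ω_d r^d / (R_D + 2r)^{d+α}, where ω_d r^d is the Lebesgue measure of a Euclidean ball of radius r in ℝ^d; in particular λ(D) > 0. -/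
open MeasureTheory Metric Set ENNReal

/-- Variational bottom of the spectrum of the Dirichlet fractional Laplacian on `D`:
the infimum of the Rayleigh quotients over nonzero smooth compactly supported functions
with support in `D` (equal to `∞` when no such function exists). -/
noncomputable def specBot (d : ℕ) (α : ℝ) (D : Set (EuclideanSpace ℝ (Fin d))) : ℝ≥0∞ :=
  ⨅ (u : EuclideanSpace ℝ (Fin d) → ℝ) (_ : ContDiff ℝ (⊤ : ℕ∞) u) (_ : HasCompactSupport u)
    (_ : tsupport u ⊆ D) (_ : u ≠ 0), gagliardo d α u / l2sq d u

theorem stmt1 (d : ℕ) (hd : 1 ≤ d) (α : ℝ) (hα : α ∈ Set.Ioc (0:ℝ) 2) (r : ℝ) (hr : 0 < r)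
    (D : Set (EuclideanSpace ℝ (Fin d))) (hopen : IsOpen D) (hne : D.Nonempty)
    (hcne : Dᶜ.Nonempty)
    (hbdd : BddAbove ((fun x => Metric.infDist x Dᶜ) '' D))
    (hext : ∀ x ∈ D, ∃ p : EuclideanSpace ℝ (Fin d),
      Metric.ball p r ⊆ Dᶜ ∧ dist x p ≤ Metric.infDist x Dᶜ + r) :
    (volume (Metric.ball (0 : EuclideanSpace ℝ (Fin d)) r) /
        ENNReal.ofReal ((inradius D + 2 * r) ^ ((d : ℝ) + α))) ≤ specBot d α D ∧
      0 < specBot d α D := by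
  have hα0 : 0 < α := hα.1
  set e : ℝ := (d : ℝ) + α with he
  have he0 : 0 < e := by positivity
  -- inradius nonneg
  have hR0 : 0 ≤ inradius D := by
    obtain ⟨x0, hx0⟩ := hne
    exact le_trans (infDist_nonneg) (le_csSup hbdd ⟨x0, hx0, rfl⟩)
  set T : ℝ := inradius D + 2 * r with hT
  have hT0 : 0 < T := by positivity
  have hTe : 0 < T ^ e := Real.rpow_pos_of_pos hT0 e
  set c : ℝ≥0∞ := volume (Metric.ball (0 : EuclideanSpace ℝ (Fin d)) r) /
      ENNReal.ofReal (T ^ e) with hc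
  have hcne' : c ≠ ⊤ :=
    (ENNReal.div_lt_top (measure_ball_lt_top).ne (ENNReal.ofReal_pos.mpr hTe).ne').ne
  have hc0 : 0 < c := by
    apply ENNReal.div_pos (measure_ball_pos _ _ hr).ne' ofReal_ne_top
  have hmain : c ≤ specBot d α D := by
    apply le_iInf; intro u; apply le_iInf; intro hu
    apply le_iInf; intro hsupp; apply le_iInf; intro htsupp; apply le_iInf; intro hu0
    -- l2sq finite and nonzero
    have hcont : Continuous u := hu.continuous
    have hcont2 : Continuous fun x => |u x| ^ 2 := (hcont.abs).pow 2
    have hcs2 : HasCompactSupport fun x => |u x| ^ 2 := by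
      have : (fun x => |u x| ^ 2) = (fun t : ℝ => |t| ^ 2) ∘ u := rfl
      rw [this]
      exact hsupp.comp_left (by simp)
    have hl2top : l2sq d u ≠ ⊤ :=
      (Integrable.lintegral_lt_top (hcont2.integrable_of_hasCompactSupport hcs2)).ne
    have hl20 : l2sq d u ≠ 0 := by
      intro h
      have hmeas : Measurable fun x => ENNReal.ofReal (|u x| ^ 2) :=
        (hcont2.measurable).ennreal_ofReal
      rw [l2sq, lintegral_eq_zero_iff hmeas] at h
      have : u =ᵐ[volume] (0 : EuclideanSpace ℝ (Fin d) → ℝ) := by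
        filter_upwards [h] with x hx
        simp only [Pi.zero_apply] at hx ⊢
        have h1 : |u x| ^ 2 ≤ 0 := ENNReal.ofReal_eq_zero.mp hx
        have h2 : |u x| ^ 2 = 0 := le_antisymm h1 (by positivity)
        have h3 : |u x| = 0 := pow_eq_zero_iff (n := 2) (by norm_num) |>.mp h2
        exact abs_eq_zero.mp h3
      exact hu0 ((hcont.ae_eq_iff_eq volume continuous_const).mp this)
    -- pointwise estimate
    have hkey : ∀ x, ENNReal.ofReal (|u x| ^ 2) * c ≤
        ∫⁻ y, ENNReal.ofReal (|u x - u y| ^ 2 / ‖x - y‖ ^ e) := by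
      intro x
      rcases eq_or_ne (u x) 0 with hx0 | hx0
      · simp [hx0]
      · have hxD : x ∈ D := htsupp (subset_tsupport u hx0)
        obtain ⟨p, hball, hdxp⟩ := hext x hxD
        have hinf : Metric.infDist x Dᶜ ≤ inradius D := le_csSup hbdd ⟨x, hxD, rfl⟩
        have hstep : ∀ y ∈ Metric.ball p r,
            ENNReal.ofReal (|u x| ^ 2 / T ^ e) ≤
              ENNReal.ofReal (|u x - u y| ^ 2 / ‖x - y‖ ^ e) := by
          intro y hy
          have hyD : y ∈ Dᶜ := hball hy
          have huy : u y = 0 := by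
            by_contra h
            exact hyD (htsupp (subset_tsupport u h))
          have hxy : x ≠ y := fun h => hyD (h ▸ hxD)
          have hd1 : ‖x - y‖ ≤ T := by
            rw [← dist_eq_norm]
            calc dist x y ≤ dist x p + dist p y := dist_triangle x p y
              _ ≤ (Metric.infDist x Dᶜ + r) + r := by
                  have := (mem_ball'.mp hy).le
                  linarith [hdxp]
              _ ≤ T := by rw [hT]; linarith
          have hd2 : 0 < ‖x - y‖ := norm_sub_pos_iff.mpr hxy
          apply ENNReal.ofReal_le_ofReal
          rw [huy, sub_zero]
          gcongr <;>
            first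
            | exact Real.rpow_pos_of_pos hd2 e
            | exact Real.rpow_le_rpow hd2.le hd1 he0.le
        calc ENNReal.ofReal (|u x| ^ 2) * c
            = ENNReal.ofReal (|u x| ^ 2 / T ^ e) *
                volume (Metric.ball (0 : EuclideanSpace ℝ (Fin d)) r) := by
              rw [ENNReal.ofReal_div_of_pos hTe, hc, ENNReal.div_eq_inv_mul,
                ENNReal.div_eq_inv_mul]
              ring
          _ = ENNReal.ofReal (|u x| ^ 2 / T ^ e) * volume (Metric.ball p r) := by
              rw [Measure.addHaar_ball_center volume p r]
          _ = ∫⁻ _ in Metric.ball p r, ENNReal.ofReal (|u x| ^ 2 / T ^ e) := by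
              rw [setLIntegral_const]
          _ ≤ ∫⁻ y in Metric.ball p r,
                ENNReal.ofReal (|u x - u y| ^ 2 / ‖x - y‖ ^ e) :=
              setLIntegral_mono' measurableSet_ball hstep
          _ ≤ _ := setLIntegral_le_lintegral _ _
      -- final
    have : l2sq d u * c ≤ gagliardo d α u := by
      rw [l2sq, ← lintegral_mul_const' c _ hcne']
      exact lintegral_mono hkey
    rw [ENNReal.le_div_iff_mul_le (Or.inl hl20) (Or.inl hl2top), mul_comm]
    exact this
  exact ⟨hmain, lt_of_lt_of_le hc0 hmain⟩
end

section
/- Let (M,d) be a metric space with a Borel measure μ satisfying 0 < V(x,s) < ∞ for all x ∈ M, s > 0, where V(x,s) := μ(B(x,s)), and suppose the volume regularity VD(C_μ, d₁) holds. Let φ be a scale function with constants c, c', α₂ ≥ α₁ > 0, and assume the tail bound: there is c₀ > 0 such that ∫_{B(x,R)ᶜ} 1/(V(x, d(x,y)) φ(d(x,y))) dμ(y) ≤ c₀/φ(R) for all x ∈ M and R > 0. Let D ⊆ M be Borel, λ > 0, c₂ > 0, and let p_D : (0,∞) × M × M → [0,∞) be measurable and satisfy: (i) p_D(t,x,y)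 = 0 unless x, y ∈ D; (ii) Chapman–Kolmogorov: p_D(s+t,x,y) = ∫_D p_D(s,x,z) p_D(t,z,y) dμ(z) for all s,t > 0 and x,y ∈ D; (iii) the upper bound p_D(t,x,y) ≤ c₂ · min( 1/V(x, φ⁻¹(t)), t/(V(x, d(x,y)) φ(d(x,y))) ); (iv) ∫_D p_D(t,x,z) dμ(z) ≤ 1 for all t > 0, x ∈ D; (v) L² decay: for every bounded measurable f vanishing outside D, the function x ↦ ∫_D p_D(t,x,y) f(y) dμ(y) has L²(μ) norm at most e^{−λ t} ‖f‖_{L²(μ)}. Then there exists a constant C > 0, depending only on C_μ, d₁, c, c', α₁, α₂, c₀, c₂, such that for every ε ∈ (0,1), every t > 0 and every x ∈ D, ∫_D p_D(t,x,y) dμ(y) ≤ C (1 + 1/ε) · exp( − ((1−ε)/(1 + d₁/(2α₁))) · λ t ). -/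
open MeasureTheory Metric Set ENNReal

/-- Preliminary survival probability estimate: under volume doubling, a scale function,
the corresponding tail estimate, a Dirichlet kernel upper bound, conservativity, and
`L²` decay with rate `λ`, the survival probability decays like
`exp(−(1−ε)/(1+d₁/(2α₁)) · λ t)`. -/
theorem stmt8
    {M : Type*} [MetricSpace M] [MeasurableSpace M] [BorelSpace M] (μ : Measure M)
    -- finite positive volumes of balls
    (hV : ∀ (x : M) (s : ℝ), 0 < s → 0 < μ (ball x s) ∧ μ (ball x s) < ∞)
    -- volume doubling VD(Cμ, d₁)
    (Cμ d₁ : ℝ) (hCμ : 1 ≤ Cμ) (hd₁ : 0 < d₁)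
    (hVD : ∀ (x : M) (r R : ℝ), 0 < r → r ≤ R →
      μ (ball x R) ≤ ENNReal.ofReal (Cμ * (R / r) ^ d₁) * μ (ball x r))
    -- scale function φ with two-sided inverse ψ on [0,∞)
    (φ ψ : ℝ → ℝ)
    (hφmono : StrictMonoOn φ (Set.Ici 0))
    (hφmaps : Set.MapsTo φ (Set.Ici 0) (Set.Ici 0))
    (hψmaps : Set.MapsTo ψ (Set.Ici 0) (Set.Ici 0))
    (hφψ : ∀ t : ℝ, 0 ≤ t → φ (ψ t) = t) (hψφ : ∀ s : ℝ, 0 ≤ s → ψ (φ s) = s)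
    (c c' α₁ α₂ : ℝ) (hc : 0 < c) (hc' : 0 < c') (hα₁ : 0 < α₁) (hα₁₂ : α₁ ≤ α₂)
    (hscale : ∀ r R : ℝ, 0 < r → r ≤ R →
      c * (R / r) ^ α₁ ≤ φ R / φ r ∧ φ R / φ r ≤ c' * (R / r) ^ α₂)
    -- tail estimate
    (c₀ : ℝ) (hc₀ : 0 < c₀)
    (htail : ∀ (x : M) (R : ℝ), 0 < R →
      ∫⁻ y in (ball x R)ᶜ, (μ (ball x (dist x y)) * ENNReal.ofReal (φ (dist x y)))⁻¹ ∂μ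
        ≤ ENNReal.ofReal (c₀ / φ R))
    -- heat kernel upper bound constant
    (c₂ : ℝ) (hc₂ : 0 < c₂) :
    -- the constant C depends only on the structural constants above
    ∃ C : ℝ, 0 < C ∧
      ∀ (D : Set M), MeasurableSet D →
      ∀ lam : ℝ, 0 < lam →
      ∀ pD : ℝ → M → M → ℝ≥0∞,
        -- measurability
        (Measurable fun q : ℝ × M × M => pD q.1 q.2.1 q.2.2) →
        -- (i) vanishing off D × D
        (∀ t : ℝ, 0 < t → ∀ x y : M, x ∉ D ∨ y ∉ D → pD t x y = 0) →
        -- (ii) Chapman–Kolmogorov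
        (∀ s t : ℝ, 0 < s → 0 < t → ∀ x ∈ D, ∀ y ∈ D,
          pD (s + t) x y = ∫⁻ z in D, pD s x z * pD t z y ∂μ) →
        -- (iii) kernel upper bound
        (∀ t : ℝ, 0 < t → ∀ x y : M,
          pD t x y ≤ ENNReal.ofReal c₂ *
            min (μ (ball x (ψ t)))⁻¹
              (ENNReal.ofReal t /
                (μ (ball x (dist x y)) * ENNReal.ofReal (φ (dist x y))))) →
        -- (iv) sub-probability
        (∀ t : ℝ, 0 < t → ∀ x ∈ D, ∫⁻ z in D, pD t x z ∂μ ≤ 1) →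
        -- (v) L² decay with rate lam
        (∀ t : ℝ, 0 < t → ∀ f : M → ℝ, Measurable f → (∃ Cf : ℝ, ∀ x : M, |f x| ≤ Cf) →
          (∀ x ∉ D, f x = 0) →
          eLpNorm (fun x => ∫ y in D, (pD t x y).toReal * f y ∂μ) 2 μ ≤
            ENNReal.ofReal (Real.exp (-(lam * t))) * eLpNorm f 2 μ) →
        ∀ ε : ℝ, ε ∈ Set.Ioo (0:ℝ) 1 → ∀ t : ℝ, 0 < t → ∀ x ∈ D,
          ∫⁻ y in D, pD t x y ∂μ ≤
            ENNReal.ofReal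
              (C * (1 + 1 / ε) *
                Real.exp (-((1 - ε) / (1 + d₁ / (2 * α₁))) * lam * t)) := by
  classical
  -- basic facts about φ and ψ
  have hφ0 : φ 0 = 0 := by
    have hψ0 : ψ 0 ∈ Set.Ici (0:ℝ) := hψmaps Set.self_mem_Ici
    have hφψ0 : φ (ψ 0) = 0 := hφψ 0 le_rfl
    rcases eq_or_lt_of_le (Set.mem_Ici.mp hψ0 : (0:ℝ) ≤ ψ 0) with h | h
    · rw [← h] at hφψ0; exact hφψ0
    · have h1 : φ 0 < φ (ψ 0) := hφmono Set.self_mem_Ici hψ0 h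
      have h2 : (0:ℝ) ≤ φ 0 := hφmaps Set.self_mem_Ici
      rw [hφψ0] at h1; linarith
  have hψpos : ∀ u : ℝ, 0 < u → 0 < ψ u := by
    intro u hu
    have h1 : (0:ℝ) ≤ ψ u := hψmaps hu.le
    rcases eq_or_lt_of_le h1 with h | h
    · exfalso
      have h2 := hφψ u hu.le
      rw [← h, hφ0] at h2; linarith
    · exact h
  refine ⟨(c₂ * Cμ) ^ ((1:ℝ)/2) + c₂ * c₀ / c, by positivity, ?_⟩
  intro D hD lam hlam pD hmeas hvanish hCK hub hsub hL2 ε hε t ht x hx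
  obtain ⟨hε0, hε1⟩ := hε
  set nu : ℝ := (1 - ε) / (1 + d₁ / (2 * α₁)) with hnu_def
  have hden : (0:ℝ) < 1 + d₁ / (2 * α₁) := by positivity
  have hnu : 0 < nu := div_pos (by linarith) hden
  have hnu_mul : nu * (1 + d₁ / (2 * α₁)) = 1 - ε := by
    rw [hnu_def]; field_simp
  have ht₁ : 0 < ε * t := mul_pos hε0 ht
  have hs : 0 < (1 - ε) * t := mul_pos (by linarith) ht
  set K : ℝ := Real.exp (nu * lam * t / α₁) with hK_def
  have hKpos : 0 < K := Real.exp_pos _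
  have hK1 : 1 ≤ K := Real.one_le_exp (by positivity)
  have hψt₁ : 0 < ψ (ε * t) := hψpos _ ht₁
  have hψs : 0 < ψ ((1 - ε) * t) := hψpos _ hs
  set r : ℝ := K * ψ (ε * t) with hr_def
  have hr : 0 < r := mul_pos hKpos hψt₁
  have hψr : ψ (ε * t) ≤ r := by nlinarith
  have hrψ : r / ψ (ε * t) = K := by rw [hr_def, mul_div_assoc, div_self hψt₁.ne', mul_one]
  have hKα : K ^ α₁ = Real.exp (nu * lam * t) := by
    have h1 : nu * lam * t = nu * lam * t / α₁ * α₁ := by field_simp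
    rw [hK_def, ← Real.exp_mul, ← h1]
  have hφr : c * Real.exp (nu * lam * t) * (ε * t) ≤ φ r := by
    have h1 := (hscale (ψ (ε * t)) r hψt₁ hψr).1
    rw [hrψ, hφψ (ε * t) ht₁.le, hKα] at h1
    calc c * Real.exp (nu * lam * t) * (ε * t)
        ≤ φ r / (ε * t) * (ε * t) := mul_le_mul_of_nonneg_right h1 ht₁.le
      _ = φ r := by field_simp
  have hφrpos : 0 < φ r := lt_of_lt_of_le (by positivity) hφr
  -- sets and measures
  set A : Set M := ball x r ∩ D with hA_def
  have hA : MeasurableSet A := measurableSet_ball.inter hD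
  have hAD : A ⊆ D := inter_subset_right
  have hμr : μ (ball x r) < ∞ := (hV x r hr).2
  haveI : IsFiniteMeasure (μ.restrict A) := by
    refine ⟨?_⟩
    rw [Measure.restrict_apply_univ]
    exact lt_of_le_of_lt (measure_mono inter_subset_left) hμr
  -- measurable sections
  have hmeas_h : Measurable fun w => pD (ε * t) x w :=
    hmeas.comp (measurable_const.prodMk (measurable_const.prodMk measurable_id))
  have hmeas_unc : Measurable fun p : M × M => pD ((1 - ε) * t) p.1 p.2 :=
    hmeas.comp (measurable_const.prodMk measurable_id)
  have hmeas_unc' : Measurable fun p : M × M => pD ((1 - ε) * t) p.2 p.1 :=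
    hmeas.comp (measurable_const.prodMk (measurable_snd.prodMk measurable_fst))
  have hmeas_sec : ∀ z : M, Measurable fun w => pD ((1 - ε) * t) w z := fun z =>
    hmeas.comp (measurable_const.prodMk (measurable_id.prodMk measurable_const))
  have hmeas_sec2 : ∀ w : M, Measurable fun y => pD ((1 - ε) * t) w y := fun w =>
    hmeas.comp (measurable_const.prodMk (measurable_const.prodMk measurable_id))
  -- the density measure
  set ν : Measure M := (μ.restrict D).withDensity (fun w => pD (ε * t) x w) with hν_def
  have hint_h : ∫⁻ w, pD (ε * t) x w ∂(μ.restrict D) ≤ 1 := hsub (ε * t) ht₁ x hx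
  haveI : IsFiniteMeasure ν :=
    isFiniteMeasure_withDensity (lt_of_le_of_lt hint_h one_lt_top).ne
  -- g
  set g : M → ℝ≥0∞ := fun w => ∫⁻ z, pD ((1 - ε) * t) w z ∂(μ.restrict A) with hg_def
  have hmeas_g : Measurable g := Measurable.lintegral_prod_right hmeas_unc
  have hg_le : ∀ w, g w ≤ 1 := by
    intro w
    by_cases hw : w ∈ D
    · calc g w ≤ ∫⁻ z, pD ((1 - ε) * t) w z ∂(μ.restrict D) :=
          lintegral_mono' (Measure.restrict_mono hAD le_rfl) le_rfl
        _ ≤ 1 := hsub ((1 - ε) * t) hs w hw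
    · have h0 : ∀ z, pD ((1 - ε) * t) w z = 0 := fun z => hvanish _ hs w z (Or.inl hw)
      simp [hg_def, h0]
  have hg_ne_top : ∀ w, g w ≠ ∞ := fun w => (lt_of_le_of_lt (hg_le w) one_lt_top).ne
  -- splitting
  have hsplit : ∫⁻ y in D, pD t x y ∂μ =
      (∫⁻ z, pD t x z ∂(μ.restrict A)) + ∫⁻ z in (ball x r)ᶜ, pD t x z ∂(μ.restrict D) := by
    rw [← lintegral_add_compl (fun z => pD t x z)
      (measurableSet_ball : MeasurableSet (ball x r)) (μ := μ.restrict D)]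
    congr 1
    rw [Measure.restrict_restrict measurableSet_ball, ← hA_def]
  -- TERM 2 : tail estimate
  have hterm2 : ∫⁻ z in (ball x r)ᶜ, pD t x z ∂(μ.restrict D) ≤
      ENNReal.ofReal (c₂ * c₀ / (c * ε) * Real.exp (-(nu * lam * t))) := by
    have hres : (μ.restrict D).restrict (ball x r)ᶜ ≤ μ.restrict (ball x r)ᶜ := by
      rw [Measure.restrict_restrict measurableSet_ball.compl]
      exact Measure.restrict_mono inter_subset_left le_rfl
    calc ∫⁻ z in (ball x r)ᶜ, pD t x z ∂(μ.restrict D)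
        ≤ ∫⁻ z in (ball x r)ᶜ, pD t x z ∂μ := lintegral_mono' hres le_rfl
      _ ≤ ∫⁻ z in (ball x r)ᶜ, ENNReal.ofReal c₂ * ENNReal.ofReal t *
            (μ (ball x (dist x z)) * ENNReal.ofReal (φ (dist x z)))⁻¹ ∂μ := by
          refine lintegral_mono fun z => ?_
          refine (hub t ht x z).trans ?_
          rw [mul_assoc]
          exact mul_le_mul_right ((min_le_right _ _).trans_eq (div_eq_mul_inv _ _)) _
      _ = ENNReal.ofReal c₂ * ENNReal.ofReal t *
            ∫⁻ z in (ball x r)ᶜ, (μ (ball x (dist x z)) * ENNReal.ofReal (φ (dist x z)))⁻¹ ∂μ :=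
          lintegral_const_mul' _ _
            (ENNReal.mul_ne_top ENNReal.ofReal_ne_top ENNReal.ofReal_ne_top)
      _ ≤ ENNReal.ofReal c₂ * ENNReal.ofReal t * ENNReal.ofReal (c₀ / φ r) :=
          mul_le_mul_right (htail x r hr) _
      _ = ENNReal.ofReal (c₂ * t * (c₀ / φ r)) := by
          rw [← ENNReal.ofReal_mul hc₂.le, ← ENNReal.ofReal_mul (by positivity)]
      _ ≤ ENNReal.ofReal (c₂ * c₀ / (c * ε) * Real.exp (-(nu * lam * t))) := by
          apply ENNReal.ofReal_le_ofReal
          have h1 : c₀ / φ r ≤ c₀ / (c * Real.exp (nu * lam * t) * (ε * t)) :=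
            div_le_div_of_nonneg_left hc₀.le (by positivity) hφr
          calc c₂ * t * (c₀ / φ r)
              ≤ c₂ * t * (c₀ / (c * Real.exp (nu * lam * t) * (ε * t))) :=
                mul_le_mul_of_nonneg_left h1 (by positivity)
            _ = c₂ * c₀ / (c * ε) * Real.exp (-(nu * lam * t)) := by
                rw [Real.exp_neg]
                have hE : Real.exp (nu * lam * t) ≠ 0 := (Real.exp_pos _).ne'
                field_simp
  -- TERM 1 : Chapman–Kolmogorov rewriting
  have hT1a : ∫⁻ z, pD t x z ∂(μ.restrict A) =
      ∫⁻ z, (∫⁻ w, pD ((1 - ε) * t) w z ∂ν) ∂(μ.restrict A) := by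
    refine setLIntegral_congr_fun hA (fun z hz => ?_)
    have h1 := hCK (ε * t) ((1 - ε) * t) ht₁ hs x hx z (hAD hz)
    rw [show ε * t + (1 - ε) * t = t by ring] at h1
    rw [h1, hν_def, lintegral_withDensity_eq_lintegral_mul (μ.restrict D) hmeas_h (hmeas_sec z)]
    rfl
  have hswap : ∫⁻ z, (∫⁻ w, pD ((1 - ε) * t) w z ∂ν) ∂(μ.restrict A) =
      ∫⁻ w, g w ∂ν :=
    lintegral_lintegral_swap hmeas_unc'.aemeasurable
  have hT1b : ∫⁻ w, g w ∂ν = ∫⁻ w in D, pD (ε * t) x w * g w ∂μ := by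
    rw [hν_def, lintegral_withDensity_eq_lintegral_mul (μ.restrict D) hmeas_h hmeas_g]
    rfl
  -- Hölder
  have hholder : ∫⁻ w in D, pD (ε * t) x w * g w ∂μ ≤
      (∫⁻ w in D, pD (ε * t) x w ^ (2:ℝ) ∂μ) ^ ((1:ℝ)/2) *
      (∫⁻ w in D, g w ^ (2:ℝ) ∂μ) ^ ((1:ℝ)/2) := by
    have h := ENNReal.lintegral_mul_le_Lp_mul_Lq (μ.restrict D)
      Real.HolderConjugate.two_two
      hmeas_h.aemeasurable hmeas_g.aemeasurable
    simpa [one_div] using h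
  -- factor 1
  have hVψ := hV x (ψ (ε * t)) hψt₁
  have hrpow_two : ∀ a : ℝ≥0∞, a ^ (2:ℝ) = a * a := by
    intro a
    rw [show (2:ℝ) = ((2:ℕ):ℝ) by norm_num, ENNReal.rpow_natCast, pow_two]
  have hMne : ENNReal.ofReal c₂ * (μ (ball x (ψ (ε * t))))⁻¹ ≠ ∞ :=
    ENNReal.mul_ne_top ENNReal.ofReal_ne_top (ENNReal.inv_ne_top.mpr hVψ.1.ne')
  have hfac1 : ∫⁻ w in D, pD (ε * t) x w ^ (2:ℝ) ∂μ ≤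
      ENNReal.ofReal c₂ * (μ (ball x (ψ (ε * t))))⁻¹ := by
    have hb : ∀ w, pD (ε * t) x w ≤ ENNReal.ofReal c₂ * (μ (ball x (ψ (ε * t))))⁻¹ :=
      fun w => (hub (ε * t) ht₁ x w).trans (mul_le_mul_right (min_le_left _ _) _)
    calc ∫⁻ w in D, pD (ε * t) x w ^ (2:ℝ) ∂μ
        = ∫⁻ w in D, pD (ε * t) x w * pD (ε * t) x w ∂μ := by simp_rw [hrpow_two]
      _ ≤ ∫⁻ w in D, (ENNReal.ofReal c₂ * (μ (ball x (ψ (ε * t))))⁻¹) * pD (ε * t) x w ∂μ :=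
          lintegral_mono fun w => mul_le_mul_left (hb w) _
      _ = (ENNReal.ofReal c₂ * (μ (ball x (ψ (ε * t))))⁻¹) * ∫⁻ w in D, pD (ε * t) x w ∂μ :=
          lintegral_const_mul' _ _ hMne
      _ ≤ (ENNReal.ofReal c₂ * (μ (ball x (ψ (ε * t))))⁻¹) * 1 :=
          mul_le_mul_right (hsub (ε * t) ht₁ x hx) _
      _ = ENNReal.ofReal c₂ * (μ (ball x (ψ (ε * t))))⁻¹ := mul_one _
  -- factor 2, via L² decay
  set f : M → ℝ := A.indicator (fun _ => (1:ℝ)) with hf_def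
  have hmeas_f : Measurable f := measurable_const.indicator hA
  have hf_bdd : ∃ Cf : ℝ, ∀ y : M, |f y| ≤ Cf := by
    refine ⟨1, fun y => ?_⟩
    by_cases hy : y ∈ A <;> simp [hf_def, indicator, hy]
  have hf_van : ∀ y ∉ D, f y = 0 := by
    intro y hy
    have hyA : y ∉ A := fun h => hy (hAD h)
    simp [hf_def, indicator, hyA]
  have hgfun : (fun w => ∫ y in D, (pD ((1 - ε) * t) w y).toReal * f y ∂μ) =
      fun w => (g w).toReal := by
    funext w
    have h1 : (fun y => (pD ((1 - ε) * t) w y).toReal * f y) =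
        A.indicator (fun y => (pD ((1 - ε) * t) w y).toReal) := by
      funext y
      by_cases hy : y ∈ A <;> simp [hf_def, indicator, hy]
    rw [h1, integral_indicator hA, Measure.restrict_restrict hA, inter_eq_left.mpr hAD]
    have hlt : ∀ᵐ y ∂(μ.restrict A), pD ((1 - ε) * t) w y < ∞ := by
      refine ae_of_all _ fun y => ?_
      have hby : pD ((1 - ε) * t) w y ≤
          ENNReal.ofReal c₂ * (μ (ball w (ψ ((1 - ε) * t))))⁻¹ :=
        (hub ((1 - ε) * t) hs w y).trans (mul_le_mul_right (min_le_left _ _) _)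
      have hfin : ENNReal.ofReal c₂ * (μ (ball w (ψ ((1 - ε) * t))))⁻¹ < ∞ :=
        lt_top_iff_ne_top.mpr (ENNReal.mul_ne_top ENNReal.ofReal_ne_top
          (ENNReal.inv_ne_top.mpr (hV w (ψ ((1 - ε) * t)) hψs).1.ne'))
      exact lt_of_le_of_lt hby hfin
    rw [integral_toReal (hmeas_sec2 w).aemeasurable hlt]
  have heq : eLpNorm (fun w => (g w).toReal) 2 μ = (∫⁻ w, g w ^ (2:ℝ) ∂μ) ^ ((1:ℝ)/2) := by
    rw [eLpNorm_eq_lintegral_rpow_enorm_toReal (by norm_num) (by norm_num)]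
    simp only [ENNReal.toReal_ofNat]
    congr 1
    refine lintegral_congr fun w => ?_
    rw [Real.enorm_eq_ofReal ENNReal.toReal_nonneg, ENNReal.ofReal_toReal (hg_ne_top w)]
  have hfnorm : eLpNorm f 2 μ = (μ A) ^ ((1:ℝ)/2) := by
    rw [hf_def, eLpNorm_indicator_const hA (by norm_num) (by norm_num)]
    simp
  have hL2app := hL2 ((1 - ε) * t) hs f hmeas_f hf_bdd hf_van
  rw [hgfun, heq] at hL2app
  have hfac2 : (∫⁻ w in D, g w ^ (2:ℝ) ∂μ) ^ ((1:ℝ)/2) ≤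
      ENNReal.ofReal (Real.exp (-(lam * ((1 - ε) * t)))) * (μ (ball x r)) ^ ((1:ℝ)/2) := by
    calc (∫⁻ w in D, g w ^ (2:ℝ) ∂μ) ^ ((1:ℝ)/2)
        ≤ (∫⁻ w, g w ^ (2:ℝ) ∂μ) ^ ((1:ℝ)/2) :=
          ENNReal.rpow_le_rpow (setLIntegral_le_lintegral _ _) (by norm_num)
      _ ≤ ENNReal.ofReal (Real.exp (-(lam * ((1 - ε) * t)))) * eLpNorm f 2 μ := hL2app
      _ ≤ ENNReal.ofReal (Real.exp (-(lam * ((1 - ε) * t)))) * (μ (ball x r)) ^ ((1:ℝ)/2) := by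
          rw [hfnorm]
          exact mul_le_mul_right
            (ENNReal.rpow_le_rpow (measure_mono inter_subset_left) (by norm_num)) _
  -- combine for term 1
  have hVb := hVD x (ψ (ε * t)) r hψt₁ hψr
  rw [hrψ] at hVb
  have hprod : ENNReal.ofReal c₂ * (μ (ball x (ψ (ε * t))))⁻¹ * μ (ball x r) ≤
      ENNReal.ofReal (c₂ * (Cμ * K ^ d₁)) := by
    calc ENNReal.ofReal c₂ * (μ (ball x (ψ (ε * t))))⁻¹ * μ (ball x r)
        ≤ ENNReal.ofReal c₂ * (μ (ball x (ψ (ε * t))))⁻¹ *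
            (ENNReal.ofReal (Cμ * K ^ d₁) * μ (ball x (ψ (ε * t)))) :=
          mul_le_mul_right hVb _
      _ = ENNReal.ofReal c₂ * ENNReal.ofReal (Cμ * K ^ d₁) *
            ((μ (ball x (ψ (ε * t))))⁻¹ * μ (ball x (ψ (ε * t)))) := by ring
      _ = ENNReal.ofReal c₂ * ENNReal.ofReal (Cμ * K ^ d₁) := by
          rw [ENNReal.inv_mul_cancel hVψ.1.ne' hVψ.2.ne, mul_one]
      _ = ENNReal.ofReal (c₂ * (Cμ * K ^ d₁)) := (ENNReal.ofReal_mul hc₂.le).symm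
  have hreal_key : Real.exp (-(lam * ((1 - ε) * t))) * (c₂ * (Cμ * K ^ d₁)) ^ ((1:ℝ)/2) =
      (c₂ * Cμ) ^ ((1:ℝ)/2) * Real.exp (-(nu * lam * t)) := by
    have e1 : (c₂ * (Cμ * K ^ d₁)) ^ ((1:ℝ)/2) =
        (c₂ * Cμ) ^ ((1:ℝ)/2) * (K ^ d₁) ^ ((1:ℝ)/2) := by
      rw [show c₂ * (Cμ * K ^ d₁) = (c₂ * Cμ) * K ^ d₁ by ring,
        Real.mul_rpow (by positivity) (by positivity)]
    have e2 : (K ^ d₁) ^ ((1:ℝ)/2) = Real.exp (nu * lam * t / α₁ * d₁ * (1/2)) := by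
      rw [hK_def, ← Real.exp_mul, ← Real.exp_mul, mul_assoc]
    rw [e1, e2, show Real.exp (-(lam * ((1 - ε) * t))) *
        ((c₂ * Cμ) ^ ((1:ℝ)/2) * Real.exp (nu * lam * t / α₁ * d₁ * (1/2))) =
        (c₂ * Cμ) ^ ((1:ℝ)/2) *
          (Real.exp (-(lam * ((1 - ε) * t))) * Real.exp (nu * lam * t / α₁ * d₁ * (1/2)))
      by ring, ← Real.exp_add]
    congr 2
    have hα₁' : α₁ ≠ 0 := hα₁.ne'
    linear_combination (lam * t) * hnu_mul
  have hterm1 : ∫⁻ z, pD t x z ∂(μ.restrict A) ≤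
      ENNReal.ofReal ((c₂ * Cμ) ^ ((1:ℝ)/2) * Real.exp (-(nu * lam * t))) := by
    rw [hT1a, hswap, hT1b]
    refine hholder.trans ?_
    calc (∫⁻ w in D, pD (ε * t) x w ^ (2:ℝ) ∂μ) ^ ((1:ℝ)/2) *
          (∫⁻ w in D, g w ^ (2:ℝ) ∂μ) ^ ((1:ℝ)/2)
        ≤ (ENNReal.ofReal c₂ * (μ (ball x (ψ (ε * t))))⁻¹) ^ ((1:ℝ)/2) *
            (ENNReal.ofReal (Real.exp (-(lam * ((1 - ε) * t)))) *
              (μ (ball x r)) ^ ((1:ℝ)/2)) :=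
          mul_le_mul' (ENNReal.rpow_le_rpow hfac1 (by norm_num)) hfac2
      _ = ENNReal.ofReal (Real.exp (-(lam * ((1 - ε) * t)))) *
            ((ENNReal.ofReal c₂ * (μ (ball x (ψ (ε * t))))⁻¹) ^ ((1:ℝ)/2) *
              (μ (ball x r)) ^ ((1:ℝ)/2)) := by ring
      _ = ENNReal.ofReal (Real.exp (-(lam * ((1 - ε) * t)))) *
            (ENNReal.ofReal c₂ * (μ (ball x (ψ (ε * t))))⁻¹ * μ (ball x r)) ^ ((1:ℝ)/2) := by
          simp only [ENNReal.mul_rpow_of_nonneg _ _ (by norm_num : (0:ℝ) ≤ 1/2)]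
      _ ≤ ENNReal.ofReal (Real.exp (-(lam * ((1 - ε) * t)))) *
            (ENNReal.ofReal (c₂ * (Cμ * K ^ d₁))) ^ ((1:ℝ)/2) :=
          mul_le_mul_right (ENNReal.rpow_le_rpow hprod (by norm_num)) _
      _ = ENNReal.ofReal (Real.exp (-(lam * ((1 - ε) * t))) *
            (c₂ * (Cμ * K ^ d₁)) ^ ((1:ℝ)/2)) := by
          rw [ENNReal.ofReal_rpow_of_pos (by positivity),
            ← ENNReal.ofReal_mul (Real.exp_pos _).le]
      _ = ENNReal.ofReal ((c₂ * Cμ) ^ ((1:ℝ)/2) * Real.exp (-(nu * lam * t))) := by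
          rw [hreal_key]
  -- conclusion
  rw [hsplit]
  calc (∫⁻ z, pD t x z ∂(μ.restrict A)) + ∫⁻ z in (ball x r)ᶜ, pD t x z ∂(μ.restrict D)
      ≤ ENNReal.ofReal ((c₂ * Cμ) ^ ((1:ℝ)/2) * Real.exp (-(nu * lam * t))) +
        ENNReal.ofReal (c₂ * c₀ / (c * ε) * Real.exp (-(nu * lam * t))) :=
        add_le_add hterm1 hterm2
    _ = ENNReal.ofReal ((c₂ * Cμ) ^ ((1:ℝ)/2) * Real.exp (-(nu * lam * t)) +
        c₂ * c₀ / (c * ε) * Real.exp (-(nu * lam * t))) :=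
        (ENNReal.ofReal_add (by positivity) (by positivity)).symm
    _ ≤ ENNReal.ofReal (((c₂ * Cμ) ^ ((1:ℝ)/2) + c₂ * c₀ / c) * (1 + 1 / ε) *
        Real.exp (-nu * lam * t)) := by
        apply ENNReal.ofReal_le_ofReal
        rw [show -nu * lam * t = -(nu * lam * t) by ring]
        have hE : 0 < Real.exp (-(nu * lam * t)) := Real.exp_pos _
        have h2 : (0:ℝ) < (c₂ * Cμ) ^ ((1:ℝ)/2) := by positivity
        have h3 : (0:ℝ) < c₂ * c₀ / c := by positivity
        have h4 : c₂ * c₀ / (c * ε) = (c₂ * c₀ / c) * (1 / ε) := by field_simp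
        rw [h4]
        nlinarith [mul_pos h3 hE, mul_pos h2 (mul_pos (one_div_pos.mpr hε0) hE),
          mul_pos h3 (mul_pos (one_div_pos.mpr hε0) hE)]
end

section
/- Let (M,d) be a metric space with a Borel measure μ satisfying 0 < V(x,s) < ∞ for all x ∈ M, s > 0, where V(x,s) := μ(B(x,s)), and suppose the volume regularity VD(C_μ, d₁) holds. Let φ be a scale function with constants c, c', α₂ ≥ α₁ > 0, and assume the tail bound: there is c₀ > 0 with ∫_{B(x,R)ᶜ} 1/(V(x, d(x,y)) φ(d(x,y))) dμ(y) ≤ c₀/φ(R) for all x ∈ M, R > 0. Let p : (0,∞) × M × M → [0,∞) be measurable with c₁ · Q(t,x,y) ≤ p(t,x,y) ≤ c₂ · Q(t,x,y) for all t > 0, x,y ∈ M, where Q(t,x,y) := min( 1/V(x, φ⁻¹(t)), t/(V(x, d(x,y)) φ(d(x,y))) ) and 0 < c₁ ≤ c₂. Let D ⊆ M be Borel, λ > 0, and let p_D : (0,∞) × M × M → [0,∞) be measurable with: p_D = 0 off D × D; p_D ≤ p pointwise; the Chapman–Kolmogorov identity p_D(s+t,x,y) = ∫_D p_D(s,x,z)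 p_D(t,z,y) dμ(z) for s,t > 0, x,y ∈ D; ∫_D p_D(t,x,z) dμ(z) ≤ 1; and for every bounded measurable f vanishing outside D, the function x ↦ ∫_D p_D(t,x,y) f(y) dμ(y) has L²(μ) norm at most e^{−λ t} ‖f‖_{L²(μ)}. Then for every ε ∈ (0,1) there exists a constant C_ε > 0, depending only on ε and the structural constants C_μ, d₁, c, c', α₁, α₂, c₀, c₁, c₂, such that for all t > 0 and all x ∈ D, ∫_D p_D(t,x,y) dμ(y) ≤ C_ε · exp( − ((1−ε)/(1 + d₁/(4α₁))) · λ t ). -/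
open MeasureTheory Metric Set ENNReal

private lemma enn_sq (a : ℝ≥0∞) : a ^ (2:ℝ) = a * a := by
  rw [show (2:ℝ) = ((2:ℕ):ℝ) by norm_num, ENNReal.rpow_natCast, sq]

private lemma real_exp_rpow (a b : ℝ) : (Real.exp a) ^ b = Real.exp (a * b) := by
  rw [Real.rpow_def_of_pos (Real.exp_pos a), Real.log_exp]

private lemma enn_sqrt_le_of_le_mul_sqrt {a b : ℝ≥0∞} (ha : a ≠ ∞)
    (h : a ≤ b * a ^ ((1:ℝ)/2)) : a ^ ((1:ℝ)/2) ≤ b := by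
  rcases eq_or_ne a 0 with rfl | ha0
  · simp
  · have hhalf : a ^ ((1:ℝ)/2) ≠ 0 := by
      simp [ENNReal.rpow_eq_zero_iff, ha0, ha]
    have hhalf' : a ^ ((1:ℝ)/2) ≠ ∞ := by
      simp [ENNReal.rpow_eq_top_iff, ha0, ha]
    have key : a ^ ((1:ℝ)/2) * a ^ ((1:ℝ)/2) = a := by
      rw [← ENNReal.rpow_add _ _ ha0 ha]; norm_num
    have h2 : a ^ ((1:ℝ)/2) * a ^ ((1:ℝ)/2) ≤ b * a ^ ((1:ℝ)/2) := by
      rw [key]; exact h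
    exact (ENNReal.mul_le_mul_iff_left hhalf hhalf').1 h2

private lemma enn_CS {α : Type*} [MeasurableSpace α] (ν : Measure α) {f g : α → ℝ≥0∞}
    (hf : AEMeasurable f ν) (hg : AEMeasurable g ν) :
    ∫⁻ z, f z * g z ∂ν ≤
      (∫⁻ z, f z ^ (2:ℝ) ∂ν) ^ ((1:ℝ)/2) * (∫⁻ z, g z ^ (2:ℝ) ∂ν) ^ ((1:ℝ)/2) := by
  have h := ENNReal.lintegral_mul_le_Lp_mul_Lq ν (p := 2) (q := 2)
    ⟨by norm_num, by norm_num, by norm_num⟩ hf hg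
  simpa using h

set_option maxHeartbeats 1000000 in
/-- Improved survival probability estimate (upper bound of Theorem 2.7 / (2.9) of the paper):
the survival probability decays like `exp(−(1−ε)/(1+d₁/(4α₁)) · λ t)`. -/
theorem stmt10
    {M : Type*} [MetricSpace M] [MeasurableSpace M] [BorelSpace M] (μ : Measure M)
    -- finite positive volumes of balls
    (hV : ∀ (x : M) (s : ℝ), 0 < s → 0 < μ (ball x s) ∧ μ (ball x s) < ∞)
    -- volume doubling VD(Cμ, d₁)
    (Cμ d₁ : ℝ) (hCμ : 1 ≤ Cμ) (hd₁ : 0 < d₁)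
    (hVD : ∀ (x : M) (r R : ℝ), 0 < r → r ≤ R →
      μ (ball x R) ≤ ENNReal.ofReal (Cμ * (R / r) ^ d₁) * μ (ball x r))
    -- scale function φ with two-sided inverse ψ on [0,∞)
    (φ ψ : ℝ → ℝ)
    (hφmono : StrictMonoOn φ (Set.Ici 0))
    (hφmaps : Set.MapsTo φ (Set.Ici 0) (Set.Ici 0))
    (hψmaps : Set.MapsTo ψ (Set.Ici 0) (Set.Ici 0))
    (hφψ : ∀ t : ℝ, 0 ≤ t → φ (ψ t) = t) (hψφ : ∀ s : ℝ, 0 ≤ s → ψ (φ s) = s)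
    (c c' α₁ α₂ : ℝ) (hc : 0 < c) (hc' : 0 < c') (hα₁ : 0 < α₁) (hα₁₂ : α₁ ≤ α₂)
    (hscale : ∀ r R : ℝ, 0 < r → r ≤ R →
      c * (R / r) ^ α₁ ≤ φ R / φ r ∧ φ R / φ r ≤ c' * (R / r) ^ α₂)
    -- tail estimate
    (c₀ : ℝ) (hc₀ : 0 < c₀)
    (htail : ∀ (x : M) (R : ℝ), 0 < R →
      ∫⁻ y in (ball x R)ᶜ, (μ (ball x (dist x y)) * ENNReal.ofReal (φ (dist x y)))⁻¹ ∂μ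
        ≤ ENNReal.ofReal (c₀ / φ R))
    -- two-sided bound for the free kernel p
    (c₁ c₂ : ℝ) (hc₁ : 0 < c₁) (hc₁₂ : c₁ ≤ c₂)
    (p : ℝ → M → M → ℝ≥0∞)
    (hp : Measurable fun q : ℝ × M × M => p q.1 q.2.1 q.2.2)
    (hp₂ : ∀ t : ℝ, 0 < t → ∀ x y : M,
      ENNReal.ofReal c₁ *
          min (μ (ball x (ψ t)))⁻¹
            (ENNReal.ofReal t / (μ (ball x (dist x y)) * ENNReal.ofReal (φ (dist x y))))
        ≤ p t x y ∧
      p t x y ≤ ENNReal.ofReal c₂ *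
          min (μ (ball x (ψ t)))⁻¹
            (ENNReal.ofReal t / (μ (ball x (dist x y)) * ENNReal.ofReal (φ (dist x y))))) :
    -- For each ε the constant Cε depends only on ε and the structural constants above
    ∀ ε : ℝ, ε ∈ Set.Ioo (0:ℝ) 1 →
      ∃ Cε : ℝ, 0 < Cε ∧
        ∀ (D : Set M), MeasurableSet D →
        ∀ lam : ℝ, 0 < lam →
        ∀ pD : ℝ → M → M → ℝ≥0∞,
          (Measurable fun q : ℝ × M × M => pD q.1 q.2.1 q.2.2) →
          (∀ t : ℝ, 0 < t → ∀ x y : M, x ∉ D ∨ y ∉ D → pD t x y = 0) →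
          (∀ t : ℝ, 0 < t → ∀ x y : M, pD t x y ≤ p t x y) →
          (∀ s t : ℝ, 0 < s → 0 < t → ∀ x ∈ D, ∀ y ∈ D,
            pD (s + t) x y = ∫⁻ z in D, pD s x z * pD t z y ∂μ) →
          (∀ t : ℝ, 0 < t → ∀ x ∈ D, ∫⁻ z in D, pD t x z ∂μ ≤ 1) →
          (∀ t : ℝ, 0 < t → ∀ f : M → ℝ, Measurable f →
            (∃ Cf : ℝ, ∀ x : M, |f x| ≤ Cf) → (∀ x ∉ D, f x = 0) →
            eLpNorm (fun x => ∫ y in D, (pD t x y).toReal * f y ∂μ) 2 μ ≤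
              ENNReal.ofReal (Real.exp (-(lam * t))) * eLpNorm f 2 μ) →
          ∀ t : ℝ, 0 < t → ∀ x ∈ D,
            ∫⁻ y in D, pD t x y ∂μ ≤
              ENNReal.ofReal
                (Cε * Real.exp (-((1 - ε) / (1 + d₁ / (4 * α₁))) * lam * t)) := by
  intro ε hε
  obtain ⟨hε0, hε1⟩ := hε
  have hc₂0 : 0 < c₂ := lt_of_lt_of_le hc₁ hc₁₂
  -- basic facts on φ and ψ
  have hψ00 : (0:ℝ) ≤ ψ 0 := hψmaps (mem_Ici.mpr le_rfl)
  have hφ00 : (0:ℝ) ≤ φ 0 := hφmaps (mem_Ici.mpr le_rfl)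
  have hψ0 : ψ 0 = 0 := by
    by_contra h
    have hlt : 0 < ψ 0 := lt_of_le_of_ne hψ00 (Ne.symm h)
    have h2 : φ 0 < φ (ψ 0) := hφmono (mem_Ici.mpr le_rfl) (mem_Ici.mpr hlt.le) hlt
    rw [hφψ 0 le_rfl] at h2
    linarith
  have hφ0 : φ 0 = 0 := by
    have h := hφψ 0 le_rfl
    rwa [hψ0] at h
  have hφpos : ∀ a : ℝ, 0 < a → 0 < φ a := by
    intro a ha
    have h2 : φ 0 < φ a := hφmono (mem_Ici.mpr le_rfl) (mem_Ici.mpr ha.le) ha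
    rwa [hφ0] at h2
  have hψpos : ∀ t : ℝ, 0 < t → 0 < ψ t := by
    intro t ht
    have h0 : 0 ≤ ψ t := hψmaps (mem_Ici.mpr ht.le)
    rcases lt_or_eq_of_le h0 with h | h
    · exact h
    · exfalso
      have := hφψ t ht.le
      rw [← h, hφ0] at this
      linarith
  have hψmono : ∀ a b : ℝ, 0 ≤ a → a ≤ b → ψ a ≤ ψ b := by
    intro a b ha hab
    by_contra h
    push_neg at h
    have h2 : φ (ψ b) < φ (ψ a) :=
      hφmono (hψmaps (mem_Ici.mpr (ha.trans hab))) (hψmaps (mem_Ici.mpr ha)) h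
    rw [hφψ a ha, hφψ b (ha.trans hab)] at h2
    linarith
  -- structural constants
  set η : ℝ := ε / 2 with hηdef
  have hη0 : 0 < η := by positivity
  have hη1 : η < 1 := by rw [hηdef]; linarith
  set s₀ : ℝ := α₁ + d₁ / 2 with hs₀def
  have hs₀ : 0 < s₀ := by positivity
  set b : ℝ := α₁ * (1 - η) / s₀ with hbdef
  have hb0 : 0 < b := by
    apply div_pos (mul_pos hα₁ (by linarith)) hs₀
  have hb1 : b < 1 := by
    rw [hbdef, div_lt_one hs₀, hs₀def]
    nlinarith
  set q : ℝ := (1 - b) / 2 with hqdef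
  have hq0 : 0 < q := by rw [hqdef]; linarith
  have hq1 : q < 1 := by rw [hqdef]; linarith
  set θstar : ℝ := 2 * b / (1 + b) with hθstardef
  have hθstar0 : 0 < θstar := by positivity
  have hθstar1 : θstar < 1 := by
    rw [hθstardef, div_lt_one (by linarith)]
    linarith
  set κ : ℝ := (1 - ε) / (1 + d₁ / (4 * α₁)) with hκdef
  have hκθ : κ < θstar := by
    have hP : (0:ℝ) < 4 * α₁ + d₁ := by positivity
    have h1 : κ = (1 - ε) * (4 * α₁) / (4 * α₁ + d₁) := by
      rw [hκdef]; field_simp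
    have h2 : θstar = 2 * (α₁ * (1 - η)) / (s₀ + α₁ * (1 - η)) := by
      rw [hθstardef, hbdef]
      field_simp
    have hden : (0:ℝ) < s₀ + α₁ * (1 - η) :=
      add_pos_of_pos_of_nonneg hs₀ (mul_nonneg hα₁.le (by linarith))
    rw [h1, h2, div_lt_div_iff₀ hP hden, hs₀def, hηdef]
    nlinarith [mul_pos hα₁ (mul_pos (show (0:ℝ) < 4*α₁+d₁ by positivity)
        (show (0:ℝ) < ε - ε/2 by linarith)),
      mul_pos (mul_pos hα₁ hα₁) (mul_pos (show (0:ℝ) < ε/2 by linarith)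
        (show (0:ℝ) < 1 - ε by linarith))]
  have hκ0 : 0 < κ := by
    rw [hκdef]
    have : (0:ℝ) < 1 + d₁ / (4 * α₁) := by positivity
    apply div_pos (by linarith) this
  set Kη : ℝ := max 1 ((1 / (c * η)) ^ ((1:ℝ) / α₁)) with hKηdef
  have hKη1 : 1 ≤ Kη := le_max_left _ _
  have hKη0 : 0 < Kη := lt_of_lt_of_le one_pos hKη1
  set M' : ℝ := max (1 / c) c' with hM'def
  have hM'0 : 0 < M' := lt_of_lt_of_le hc' (le_max_right _ _)
  set K₁ : ℝ := max 1 ((Cμ * Kη ^ d₁ * max c₂ 1) ^ ((1:ℝ)/2) + c₂ * c₀ * M' * 2 ^ α₂)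
    with hK₁def
  have hK₁1 : 1 ≤ K₁ := le_max_left _ _
  have hK₁0 : 0 < K₁ := lt_of_lt_of_le one_pos hK₁1
  -- choose the number of iterations
  obtain ⟨N, hN⟩ : ∃ N : ℕ, q ^ N < (θstar - κ) / θstar := by
    apply exists_pow_lt_of_lt_one _ hq1
    apply div_pos (by linarith) hθstar0
  have hθN : κ ≤ θstar * (1 - q ^ N) := by
    have h1 : q ^ N * θstar < θstar - κ := (lt_div_iff₀ hθstar0).1 hN
    have h2 : θstar * (1 - q ^ N) = θstar - q ^ N * θstar := by ring
    linarith
  refine ⟨K₁ ^ N, by positivity, ?_⟩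
  intro D hD lam hlam pD hpD hzero hple hCK hmass hL2
  -- sigma-finiteness (given any point of M)
  have hSF : ∀ _ : M, SigmaFinite μ := by
    intro x₀
    refine ⟨⟨⟨fun n => ball x₀ (n + 1), fun _ => trivial,
      fun n => (hV x₀ (n + 1) (by positivity)).2, ?_⟩⟩⟩
    apply eq_univ_of_forall
    intro y
    obtain ⟨n, hn⟩ := exists_nat_gt (dist y x₀)
    exact mem_iUnion.mpr ⟨n, mem_ball.mpr (by push_cast; linarith)⟩
  -- measurability of sections
  have mpDsec : ∀ (t : ℝ) (x : M), Measurable fun z => pD t x z := by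
    intro t x
    exact hpD.comp (measurable_const.prodMk (measurable_const.prodMk measurable_id))
  have mpDpair : ∀ t : ℝ, Measurable fun w : M × M => pD t w.1 w.2 := by
    intro t
    exact hpD.comp (measurable_const.prodMk measurable_id)
  -- pointwise bounds on pD
  have hVne : ∀ (x : M) (s : ℝ), 0 < s → μ (ball x s) ≠ 0 := fun x s hs => (hV x s hs).1.ne'
  have hVfin : ∀ (x : M) (s : ℝ), 0 < s → μ (ball x s) ≠ ∞ := fun x s hs => (hV x s hs).2.ne
  have hub : ∀ t : ℝ, 0 < t → ∀ x y : M, pD t x y ≤ ENNReal.ofReal c₂ * (μ (ball x (ψ t)))⁻¹ := by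
    intro t ht x y
    exact (hple t ht x y).trans ((hp₂ t ht x y).2.trans
      (mul_le_mul_right (min_le_left _ _) _))
  have hfin : ∀ t : ℝ, 0 < t → ∀ x y : M, pD t x y ≠ ∞ := by
    intro t ht x y
    have h2 : ENNReal.ofReal c₂ * (μ (ball x (ψ t)))⁻¹ ≠ ∞ :=
      ENNReal.mul_ne_top ofReal_ne_top (ENNReal.inv_ne_top.mpr (hVne x (ψ t) (hψpos t ht)))
    exact ne_top_of_le_ne_top h2 (hub t ht x y)
  have hub_off : ∀ t : ℝ, 0 < t → ∀ x y : M, pD t x y ≤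
      ENNReal.ofReal c₂ * ENNReal.ofReal t * (μ (ball x (dist x y)) * ENNReal.ofReal (φ (dist x y)))⁻¹ := by
    intro t ht x y
    refine (hple t ht x y).trans ((hp₂ t ht x y).2.trans ?_)
    rw [mul_assoc]
    exact mul_le_mul_right ((min_le_right _ _).trans_eq (div_eq_mul_inv _ _)) _
  -- tail estimate for pD
  have htail₀ : ∀ t : ℝ, 0 < t → ∀ w : M, ∀ R : ℝ, 0 < R → ∀ A : Set M,
      A ⊆ (ball w R)ᶜ → ∫⁻ z in A, pD t w z ∂μ ≤ ENNReal.ofReal (c₂ * (t * (c₀ / φ R))) := by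
    intro t ht w R hR A hA
    calc ∫⁻ z in A, pD t w z ∂μ
        ≤ ∫⁻ z in (ball w R)ᶜ, pD t w z ∂μ :=
          lintegral_mono' (Measure.restrict_mono hA le_rfl) le_rfl
      _ ≤ ∫⁻ z in (ball w R)ᶜ,
            ENNReal.ofReal c₂ * ENNReal.ofReal t * (μ (ball w (dist w z)) * ENNReal.ofReal (φ (dist w z)))⁻¹ ∂μ :=
          lintegral_mono fun z => hub_off t ht w z
      _ = ENNReal.ofReal c₂ * ENNReal.ofReal t *
            ∫⁻ z in (ball w R)ᶜ, (μ (ball w (dist w z)) * ENNReal.ofReal (φ (dist w z)))⁻¹ ∂μ :=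
          lintegral_const_mul' _ _ (ENNReal.mul_ne_top ofReal_ne_top ofReal_ne_top)
      _ ≤ ENNReal.ofReal c₂ * ENNReal.ofReal t * ENNReal.ofReal (c₀ / φ R) := mul_le_mul_right (htail w R hR) _
      _ = ENNReal.ofReal (c₂ * (t * (c₀ / φ R))) := by
          rw [← ofReal_mul hc₂0.le, ← ofReal_mul (by positivity)]
          ring_nf
  -- mass bound for all starting points
  have humass : ∀ t : ℝ, 0 < t → ∀ z : M, ∫⁻ y in D, pD t z y ∂μ ≤ 1 := by
    intro t ht z
    by_cases hz : z ∈ D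
    · exact hmass t ht z hz
    · have h0 : ∫⁻ y in D, pD t z y ∂μ = 0 := by
        rw [setLIntegral_congr_fun hD (fun y _ => hzero t ht z y (Or.inl hz))]
        simp
      rw [h0]; exact zero_le
  have huzero : ∀ t : ℝ, 0 < t → ∀ x : M, x ∉ D → ∫⁻ z in D, pD t x z ∂μ = 0 := by
    intro t ht x hx
    rw [setLIntegral_congr_fun hD (fun z _ => hzero t ht x z (Or.inl hx))]
    simp
  -- extension of set integrals to the whole space
  have hfull : ∀ h : M → ℝ≥0∞, (∀ z, z ∉ D → h z = 0) →
      ∫⁻ z, h z ∂μ = ∫⁻ z in D, h z ∂μ := by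
    intro h h0
    rw [← lintegral_add_compl h hD]
    have hz : ∫⁻ z in Dᶜ, h z ∂μ = 0 := by
      rw [setLIntegral_congr_fun hD.compl (fun z hz => h0 z hz)]
      simp
    rw [hz, add_zero]
  -- the Chapman–Kolmogorov splitting
  have hsplit : ∀ s t : ℝ, 0 < s → 0 < t → ∀ x, x ∈ D → ∀ A : Set M, MeasurableSet A →
      A ⊆ D → ∫⁻ z in A, pD (s + t) x z ∂μ
        = ∫⁻ w in D, pD s x w * ∫⁻ z in A, pD t w z ∂μ ∂μ := by
    intro s t hs ht x hx A hA hAD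
    haveI : SigmaFinite μ := hSF x
    have h1 : ∫⁻ z in A, pD (s + t) x z ∂μ
        = ∫⁻ z in A, ∫⁻ w in D, pD s x w * pD t w z ∂μ ∂μ :=
      setLIntegral_congr_fun hA (fun z hz => hCK s t hs ht x hx z (hAD hz))
    have hmeas : AEMeasurable (Function.uncurry fun z w => pD s x w * pD t w z)
        ((μ.restrict A).prod (μ.restrict D)) := by
      apply Measurable.aemeasurable
      have : (Function.uncurry fun z w => pD s x w * pD t w z)
          = fun w : M × M => pD s x w.2 * pD t w.2 w.1 := rfl
      rw [this]
      exact ((mpDsec s x).comp measurable_snd).mul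
        ((mpDpair t).comp (measurable_snd.prodMk measurable_fst))
    rw [h1, lintegral_lintegral_swap hmeas]
    exact lintegral_congr fun w => lintegral_const_mul' _ _ (hfin s hs x w)
  -- the L² contraction of the kernel
  have hcontr : ∀ T s : ℝ, 0 < s → s < T → ∀ x, x ∈ D →
      (∫⁻ y in D, pD T x y ^ (2:ℝ) ∂μ) ^ ((1:ℝ)/2)
        ≤ ENNReal.ofReal (Real.exp (-(lam * (T - s)))) *
          (∫⁻ y in D, pD s x y ^ (2:ℝ) ∂μ) ^ ((1:ℝ)/2) := by
    intro T s hs hsT x hx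
    haveI : SigmaFinite μ := hSF x
    have hT : 0 < T := hs.trans hsT
    have hΔ0 : 0 < T - s := by linarith
    set Δ := T - s with hΔdef
    have hΔ : 0 < Δ := hΔ0
    set Cb : ℝ≥0∞ := ENNReal.ofReal c₂ * (μ (ball x (ψ T)))⁻¹ with hCbdef
    have hCbtop : Cb ≠ ∞ :=
      ENNReal.mul_ne_top ofReal_ne_top (ENNReal.inv_ne_top.mpr (hVne x (ψ T) (hψpos T hT)))
    have hFle : ∀ y, pD T x y ≤ Cb := fun y => hub T hT x y
    set f : M → ℝ := fun y => (pD T x y).toReal with hfdef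
    have hfmeas : Measurable f := (mpDsec T x).ennreal_toReal
    have hofReal_f : ∀ y, ENNReal.ofReal (f y) = pD T x y := fun y =>
      ENNReal.ofReal_toReal (hfin T hT x y)
    have hfnn : ∀ y, 0 ≤ f y := fun _ => ENNReal.toReal_nonneg
    have hfbdd : ∃ Cf : ℝ, ∀ y, |f y| ≤ Cf :=
      ⟨Cb.toReal, fun y => by
        rw [abs_of_nonneg (hfnn y)]
        exact ENNReal.toReal_mono hCbtop (hFle y)⟩
    have hf0 : ∀ y ∉ D, f y = 0 := fun y hy => by
      rw [hfdef]; simp [hzero T hT x y (Or.inr hy)]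
    set N2 : ℝ≥0∞ := ∫⁻ y in D, pD T x y ^ (2:ℝ) ∂μ with hN2def
    set Ns2 : ℝ≥0∞ := ∫⁻ y in D, pD s x y ^ (2:ℝ) ∂μ with hNs2def
    have hN2top : N2 ≠ ∞ := by
      have hpt : ∀ y, pD T x y ^ (2:ℝ) ≤ Cb * pD T x y := fun y => by
        rw [enn_sq]; exact mul_le_mul_left (hFle y) _
      have h1 : N2 ≤ Cb := by
        calc N2 ≤ ∫⁻ y in D, Cb * pD T x y ∂μ := lintegral_mono hpt
          _ = Cb * ∫⁻ y in D, pD T x y ∂μ := lintegral_const_mul' _ _ hCbtop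
          _ ≤ Cb * 1 := mul_le_mul_right (humass T hT x) _
          _ = Cb := mul_one _
      exact ne_top_of_le_ne_top hCbtop h1
    rcases eq_or_ne N2 0 with hN20 | hN2ne
    · rw [hN20, ENNReal.zero_rpow_of_pos (by norm_num)]
      exact zero_le
    set g : M → ℝ := fun z => ∫ y in D, (pD Δ z y).toReal * f y ∂μ with hgdef
    have hgnn : ∀ z, 0 ≤ g z := fun z =>
      integral_nonneg fun y => mul_nonneg ENNReal.toReal_nonneg (hfnn y)
    set G : M → ℝ≥0∞ := fun z => ∫⁻ y in D, pD Δ z y * pD T x y ∂μ with hGdef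
    have hGg : ∀ z, G z = ENNReal.ofReal (g z) := by
      intro z
      have hint0 : ∫⁻ y in D, pD Δ z y * pD T x y ∂μ ≠ ∞ := by
        have h1 : ∫⁻ y in D, pD Δ z y * pD T x y ∂μ ≤ Cb := by
          calc ∫⁻ y in D, pD Δ z y * pD T x y ∂μ
              ≤ ∫⁻ y in D, Cb * pD Δ z y ∂μ := lintegral_mono fun y => by
                rw [mul_comm (pD Δ z y)]
                exact mul_le_mul_left (hFle y) _
            _ = Cb * ∫⁻ y in D, pD Δ z y ∂μ := lintegral_const_mul' _ _ hCbtop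
            _ ≤ Cb * 1 := mul_le_mul_right (humass Δ hΔ z) _
            _ = Cb := mul_one _
        exact ne_top_of_le_ne_top hCbtop h1
      have hint : Integrable (fun y => (pD Δ z y).toReal * f y) (μ.restrict D) := by
        have h2 := integrable_toReal_of_lintegral_ne_top
          (((mpDsec Δ z).mul (mpDsec T x)).aemeasurable) hint0
        have h3 : (fun y => ((pD Δ z y) * (pD T x y)).toReal)
            = fun y => (pD Δ z y).toReal * f y := by
          funext y
          rw [hfdef, ENNReal.toReal_mul]
        simp only [Pi.mul_apply] at h2; rwa [h3] at h2
      have h1 := MeasureTheory.ofReal_integral_eq_lintegral_ofReal hint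
        (ae_of_all _ fun y => mul_nonneg ENNReal.toReal_nonneg (hfnn y))
      calc G z = ∫⁻ y in D, ENNReal.ofReal ((pD Δ z y).toReal * f y) ∂μ := by
            rw [hGdef]
            refine lintegral_congr fun y => ?_
            rw [ENNReal.ofReal_mul ENNReal.toReal_nonneg,
              ENNReal.ofReal_toReal (hfin Δ hΔ z y), hofReal_f y]
        _ = ENNReal.ofReal (g z) := h1.symm
    have hG0 : ∀ z, z ∉ D → G z = 0 := by
      intro z hz
      have h1 : G z = ∫⁻ (_ : M) in D, 0 ∂μ := by
        rw [hGdef]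
        exact lintegral_congr fun y => by
          rw [hzero Δ hΔ z y (Or.inl hz), zero_mul]
      simpa using h1
    have hGmeas : Measurable G := by
      rw [hGdef]
      have hunc : Measurable (Function.uncurry fun z y => pD Δ z y * pD T x y) := by
        have hid : (Function.uncurry fun z y => pD Δ z y * pD T x y)
            = fun w : M × M => pD Δ w.1 w.2 * pD T x w.2 := rfl
        rw [hid]
        exact (mpDpair Δ).mul ((mpDsec T x).comp measurable_snd)
      exact Measurable.lintegral_prod_right hunc
    have hCKT : ∀ y ∈ D, pD T x y = ∫⁻ w in D, pD s x w * pD Δ w y ∂μ := by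
      intro y hy
      have h1 := hCK s Δ hs hΔ x hx y hy
      rwa [show s + Δ = T by rw [hΔdef]; ring] at h1
    have hstepd : N2 = ∫⁻ w in D, pD s x w * G w ∂μ := by
      have h1 : N2 = ∫⁻ y in D, ∫⁻ w in D, pD s x w * pD Δ w y * pD T x y ∂μ ∂μ := by
        rw [hN2def]
        refine setLIntegral_congr_fun hD (fun y hy => ?_)
        rw [enn_sq]
        calc pD T x y * pD T x y
            = (∫⁻ w in D, pD s x w * pD Δ w y ∂μ) * pD T x y :=
              congrArg (fun a => a * pD T x y) (hCKT y hy)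
          _ = ∫⁻ w in D, pD s x w * pD Δ w y * pD T x y ∂μ :=
              (lintegral_mul_const' _ _ (hfin T hT x y)).symm
      have hmeas2 : AEMeasurable (Function.uncurry fun y w => pD s x w * pD Δ w y * pD T x y)
          ((μ.restrict D).prod (μ.restrict D)) := by
        apply Measurable.aemeasurable
        have hid : (Function.uncurry fun y w => pD s x w * pD Δ w y * pD T x y)
            = fun w : M × M => pD s x w.2 * pD Δ w.2 w.1 * pD T x w.1 := rfl
        rw [hid]
        exact (((mpDsec s x).comp measurable_snd).mul
          ((mpDpair Δ).comp (measurable_snd.prodMk measurable_fst))).mul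
          ((mpDsec T x).comp measurable_fst)
      rw [h1, lintegral_lintegral_swap hmeas2]
      refine lintegral_congr fun w => ?_
      calc ∫⁻ y in D, pD s x w * pD Δ w y * pD T x y ∂μ
          = ∫⁻ y in D, pD s x w * (pD Δ w y * pD T x y) ∂μ := by
            simp only [mul_assoc]
        _ = pD s x w * G w := by
            rw [hGdef]
            exact lintegral_const_mul' _ _ (hfin s hs x w)
    have hCS : ∫⁻ w in D, pD s x w * G w ∂μ
        ≤ Ns2 ^ ((1:ℝ)/2) * (∫⁻ w in D, G w ^ (2:ℝ) ∂μ) ^ ((1:ℝ)/2) := by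
      have h1 := enn_CS (μ.restrict D) (mpDsec s x).aemeasurable hGmeas.aemeasurable
      rw [← hNs2def] at h1
      exact h1
    have hL := hL2 Δ hΔ f hfmeas hfbdd hf0
    have hL' : eLpNorm g 2 μ ≤ ENNReal.ofReal (Real.exp (-(lam * Δ))) * eLpNorm f 2 μ := by
      rw [hgdef]
      exact hL
    have ef : eLpNorm f 2 μ = N2 ^ ((1:ℝ)/2) := by
      rw [eLpNorm_eq_lintegral_rpow_enorm_toReal (by norm_num) (by norm_num)]
      have h2 : ∫⁻ y, ‖f y‖ₑ ^ ((2:ℝ≥0∞)).toReal ∂μ = N2 := by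
        rw [hN2def, ← hfull (fun y => pD T x y ^ (2:ℝ)) (fun y hy => by
          show pD T x y ^ (2:ℝ) = 0
          rw [hzero T hT x y (Or.inr hy)]
          exact ENNReal.zero_rpow_of_pos (by norm_num))]
        refine lintegral_congr fun y => ?_
        rw [Real.enorm_eq_ofReal (hfnn y), hofReal_f y]
        norm_num
      rw [h2]
      norm_num
    have eg : eLpNorm g 2 μ = (∫⁻ w in D, G w ^ (2:ℝ) ∂μ) ^ ((1:ℝ)/2) := by
      rw [eLpNorm_eq_lintegral_rpow_enorm_toReal (by norm_num) (by norm_num)]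
      have h2 : ∫⁻ w, ‖g w‖ₑ ^ ((2:ℝ≥0∞)).toReal ∂μ = ∫⁻ w in D, G w ^ (2:ℝ) ∂μ := by
        rw [← hfull (fun w => G w ^ (2:ℝ)) (fun w hw => by
          show G w ^ (2:ℝ) = 0
          rw [hG0 w hw]
          exact ENNReal.zero_rpow_of_pos (by norm_num))]
        refine lintegral_congr fun w => ?_
        rw [Real.enorm_eq_ofReal (hgnn w), ← hGg w]
        norm_num
      rw [h2]
      norm_num
    have hGnorm : (∫⁻ w in D, G w ^ (2:ℝ) ∂μ) ^ ((1:ℝ)/2)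
        ≤ ENNReal.ofReal (Real.exp (-(lam * Δ))) * N2 ^ ((1:ℝ)/2) := by
      rw [← eg, ← ef]
      exact hL'
    have hmain : N2 ≤ (Ns2 ^ ((1:ℝ)/2) * ENNReal.ofReal (Real.exp (-(lam * Δ))))
        * N2 ^ ((1:ℝ)/2) := by
      calc N2 = ∫⁻ w in D, pD s x w * G w ∂μ := hstepd
        _ ≤ Ns2 ^ ((1:ℝ)/2) * (∫⁻ w in D, G w ^ (2:ℝ) ∂μ) ^ ((1:ℝ)/2) := hCS
        _ ≤ Ns2 ^ ((1:ℝ)/2) * (ENNReal.ofReal (Real.exp (-(lam * Δ))) * N2 ^ ((1:ℝ)/2)) :=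
            mul_le_mul_right hGnorm _
        _ = (Ns2 ^ ((1:ℝ)/2) * ENNReal.ofReal (Real.exp (-(lam * Δ)))) * N2 ^ ((1:ℝ)/2) :=
            (mul_assoc _ _ _).symm
    have hfinal := enn_sqrt_le_of_le_mul_sqrt hN2top hmain
    calc N2 ^ ((1:ℝ)/2) ≤ Ns2 ^ ((1:ℝ)/2) * ENNReal.ofReal (Real.exp (-(lam * Δ))) := hfinal
      _ = ENNReal.ofReal (Real.exp (-(lam * Δ))) * Ns2 ^ ((1:ℝ)/2) := mul_comm _ _
  -- the self-improving step
  have step : ∀ θ C : ℝ, 0 ≤ θ → θ < 1 → 1 ≤ C →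
      (∀ t, 0 < t → ∀ x, ∫⁻ z in D, pD t x z ∂μ ≤ ENNReal.ofReal (C * Real.exp (-(θ * lam * t)))) →
      ∀ t, 0 < t → ∀ x, ∫⁻ z in D, pD t x z ∂μ ≤
        ENNReal.ofReal (K₁ * C * Real.exp
          (-((θ/2 + α₁ * ((1-η)*(1-θ/2)/s₀)) * lam * t))) := by
    intro θ C hθ0 hθ1 hC Hu T hT x
    have hC0 : (0:ℝ) < C := lt_of_lt_of_le one_pos hC
    by_cases hx : x ∈ D
    swap
    · rw [huzero T hT x hx]; exact zero_le
    set γ : ℝ := (1-η)*(1-θ/2)/s₀ with hγdef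
    have hγ0 : 0 < γ := div_pos (mul_pos (by linarith) (by linarith)) hs₀
    set Gθ : ℝ := θ/2 + α₁ * γ with hGθdef
    set E : ℝ := Gθ * lam * T with hEdef
    set sη : ℝ := η * T with hsηdef
    have hsη0 : 0 < sη := mul_pos hη0 hT
    have hsηT : sη < T := by
      rw [hsηdef]
      calc η * T < 1 * T := mul_lt_mul_of_pos_right hη1 hT
        _ = T := one_mul T
    set ρ : ℝ := Real.exp (γ * lam * T) with hρdef
    have hρ1 : 1 ≤ ρ := Real.one_le_exp (by positivity)
    have hρ0 : 0 < ρ := lt_of_lt_of_le one_pos hρ1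
    set r : ℝ := ψ T * ρ with hrdef
    have hψT0 : 0 < ψ T := hψpos T hT
    have hr0 : 0 < r := mul_pos hψT0 hρ0
    have hr20 : 0 < r/2 := by positivity
    have hψTr : ψ T ≤ r := le_mul_of_one_le_right hψT0.le hρ1
    have hψs0 : 0 < ψ sη := hψpos sη hsη0
    have hψsr : ψ sη ≤ r := le_trans (hψmono sη T hsη0.le hsηT.le) hψTr
    -- ratio bound ψ T / ψ sη ≤ Kη
    have hratio : ψ T / ψ sη ≤ Kη := by
      have hsle : ψ sη ≤ ψ T := hψmono sη T hsη0.le hsηT.le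
      have h1 := (hscale (ψ sη) (ψ T) hψs0 hsle).1
      rw [hφψ T hT.le, hφψ sη hsη0.le] at h1
      have hTs : T / sη = 1/η := by
        rw [hsηdef]; field_simp
      rw [hTs] at h1
      have hX0 : 0 < ψ T / ψ sη := div_pos hψT0 hψs0
      have h2 : (ψ T / ψ sη) ^ α₁ ≤ 1/(c*η) := by
        rw [le_div_iff₀ (by positivity : (0:ℝ) < c*η)]
        calc (ψ T / ψ sη) ^ α₁ * (c*η) = (c * (ψ T / ψ sη) ^ α₁) * η := by ring
          _ ≤ (1/η) * η := mul_le_mul_of_nonneg_right h1 hη0.le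
          _ = 1 := by field_simp
      have h4 : ((ψ T / ψ sη) ^ α₁) ^ ((1:ℝ)/α₁) ≤ (1/(c*η)) ^ ((1:ℝ)/α₁) :=
        Real.rpow_le_rpow (Real.rpow_nonneg hX0.le _) h2 (by positivity)
      rw [← Real.rpow_mul hX0.le, mul_one_div_cancel hα₁.ne', Real.rpow_one] at h4
      exact h4.trans (le_max_right _ _)
    have hrψs : r / ψ sη ≤ Kη * ρ := by
      have h1 : r / ψ sη = (ψ T / ψ sη) * ρ := by
        rw [hrdef]; ring
      rw [h1]
      exact mul_le_mul_of_nonneg_right hratio hρ0.le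
    -- tail real bound
    have hφr2 : 0 < φ (r/2) := hφpos _ hr20
    have hρα : ρ ^ (-α₁) = Real.exp (-(γ * α₁ * lam * T)) := by
      rw [hρdef, real_exp_rpow]; ring_nf
    have hραpos : 0 < ρ ^ (-α₁) := Real.rpow_pos_of_pos hρ0 _
    have h2α₂pos : (0:ℝ) < 2 ^ α₂ := Real.rpow_pos_of_pos (by norm_num) _
    have hTphi : T / φ (r/2) ≤ M' * 2 ^ α₂ * ρ ^ (-α₁) := by
      have h2α : (2:ℝ) ^ α₁ ≤ (2:ℝ) ^ α₂ :=
        Real.rpow_le_rpow_of_exponent_le one_le_two hα₁₂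
      have h2α₁pos : (0:ℝ) < 2 ^ α₁ := Real.rpow_pos_of_pos (by norm_num) _
      have hρα₁pos : (0:ℝ) < ρ ^ α₁ := Real.rpow_pos_of_pos hρ0 _
      rcases le_or_gt (ψ T) (r/2) with hcase | hcase
      · have h1 := (hscale (ψ T) (r/2) hψT0 hcase).1
        rw [hφψ T hT.le] at h1
        have hhalf : r/2/ψ T = ρ/2 := by
          rw [hrdef]; field_simp
        rw [hhalf] at h1
        have h3 : (ρ/2 : ℝ) ^ α₁ = ρ^α₁ / 2^α₁ := Real.div_rpow hρ0.le (by norm_num) α₁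
        have h4 : T / φ (r/2) ≤ 1 / (c * (ρ/2)^α₁) := by
          rw [div_le_div_iff₀ hφr2 (by positivity)]
          have h5 := (le_div_iff₀ hT).1 h1
          rw [one_mul, mul_comm]
          exact h5
        calc T / φ (r/2) ≤ 1 / (c * (ρ/2)^α₁) := h4
          _ = (1/c) * 2^α₁ * ρ^(-α₁) := by
              rw [h3, Real.rpow_neg hρ0.le]
              field_simp
          _ ≤ M' * 2^α₂ * ρ^(-α₁) := by
              have hM1 : 1/c ≤ M' := le_max_left _ _
              have h6 : (1/c) * 2^α₁ ≤ M' * 2^α₂ :=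
                mul_le_mul hM1 h2α h2α₁pos.le hM'0.le
              exact mul_le_mul_of_nonneg_right h6 hραpos.le
      · have h1 := (hscale (r/2) (ψ T) hr20 hcase.le).2
        rw [hφψ T hT.le] at h1
        have hhalf : ψ T/(r/2) = 2/ρ := by
          rw [hrdef]; field_simp
        rw [hhalf] at h1
        have h3 : (2/ρ : ℝ)^α₂ = 2^α₂ * ρ^(-α₂) := by
          rw [Real.div_rpow (by norm_num : (0:ℝ) ≤ 2) hρ0.le α₂, Real.rpow_neg hρ0.le,
            div_eq_mul_inv]
        have h5 : ρ^(-α₂) ≤ ρ^(-α₁) := Real.rpow_le_rpow_of_exponent_le hρ1 (by linarith)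
        have hρα₂pos : (0:ℝ) < ρ ^ (-α₂) := Real.rpow_pos_of_pos hρ0 _
        calc T / φ (r/2) ≤ c' * (2/ρ)^α₂ := h1
          _ = c' * 2^α₂ * ρ^(-α₂) := by rw [h3]; ring
          _ ≤ M' * 2^α₂ * ρ^(-α₁) := by
              have hc'M : c' ≤ M' := le_max_right _ _
              exact mul_le_mul (mul_le_mul hc'M le_rfl h2α₂pos.le hM'0.le) h5
                hρα₂pos.le (mul_nonneg hM'0.le h2α₂pos.le)
    -- volume & kernel bounds
    set μBs := μ (ball x (ψ sη)) with hμBsdef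
    have hμBs0 : μBs ≠ 0 := hVne x (ψ sη) hψs0
    have hμBstop : μBs ≠ ∞ := hVfin x (ψ sη) hψs0
    have hNs2 : ∫⁻ y in D, pD sη x y ^ (2:ℝ) ∂μ
        ≤ (ENNReal.ofReal c₂ * μBs⁻¹) * ENNReal.ofReal (C * Real.exp (-(θ * lam * sη))) := by
      have hpt : ∀ y, pD sη x y ^ (2:ℝ) ≤ (ENNReal.ofReal c₂ * μBs⁻¹) * pD sη x y := fun y => by
        rw [enn_sq]; exact mul_le_mul_left (hub sη hsη0 x y) _
      calc ∫⁻ y in D, pD sη x y ^ (2:ℝ) ∂μ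
          ≤ ∫⁻ y in D, (ENNReal.ofReal c₂ * μBs⁻¹) * pD sη x y ∂μ := lintegral_mono hpt
        _ = (ENNReal.ofReal c₂ * μBs⁻¹) * ∫⁻ y in D, pD sη x y ∂μ :=
            lintegral_const_mul' _ _
              (ENNReal.mul_ne_top ofReal_ne_top (ENNReal.inv_ne_top.mpr hμBs0))
        _ ≤ _ := mul_le_mul_right (Hu sη hsη0 x) _
    -- near part via Cauchy-Schwarz
    have hnear : ∫⁻ z in D ∩ ball x r, pD T x z ∂μ
        ≤ (μ (ball x r)) ^ ((1:ℝ)/2) * (∫⁻ y in D, pD T x y ^ (2:ℝ) ∂μ) ^ ((1:ℝ)/2) := by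
      have hind : ∫⁻ z in D ∩ ball x r, pD T x z ∂μ
          = ∫⁻ z in D, (ball x r).indicator (fun _ => (1:ℝ≥0∞)) z * pD T x z ∂μ := by
        rw [inter_comm, ← Measure.restrict_restrict measurableSet_ball,
          ← lintegral_indicator measurableSet_ball]
        refine lintegral_congr fun z => ?_
        by_cases hz : z ∈ ball x r <;> simp [hz]
      rw [hind]
      have hmeasind : Measurable (fun z : M => (ball x r).indicator (fun _ => (1:ℝ≥0∞)) z) :=
        measurable_const.indicator measurableSet_ball
      have h1 := enn_CS (μ.restrict D)
        (f := fun z : M => (ball x r).indicator (fun _ => (1:ℝ≥0∞)) z)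
        (g := fun z => pD T x z) hmeasind.aemeasurable (mpDsec T x).aemeasurable
      refine h1.trans ?_
      have h2 : ∫⁻ z in D, ((ball x r).indicator (fun _ => (1:ℝ≥0∞)) z) ^ (2:ℝ) ∂μ
          ≤ μ (ball x r) := by
        have h3 : ∀ z, ((ball x r).indicator (fun _ => (1:ℝ≥0∞)) z) ^ (2:ℝ)
            = (ball x r).indicator (fun _ => (1:ℝ≥0∞)) z := fun z => by
          by_cases hz : z ∈ ball x r
          · simp [hz]
          · simp [hz, ENNReal.zero_rpow_of_pos]
        calc ∫⁻ z in D, ((ball x r).indicator (fun _ => (1:ℝ≥0∞)) z) ^ (2:ℝ) ∂μ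
            = ∫⁻ z in D, (ball x r).indicator (fun _ => (1:ℝ≥0∞)) z ∂μ := lintegral_congr h3
          _ = (μ.restrict D) (ball x r) := lintegral_indicator_one measurableSet_ball
          _ = μ (ball x r ∩ D) := Measure.restrict_apply measurableSet_ball
          _ ≤ μ (ball x r) := measure_mono inter_subset_left
      exact mul_le_mul_left (ENNReal.rpow_le_rpow h2 (by norm_num)) _
    have hcon := hcontr T sη hsη0 hsηT x hx
    have hVD1 : μ (ball x r) ≤ ENNReal.ofReal (Cμ * (r / ψ sη) ^ d₁) * μBs :=
      hVD x (ψ sη) r hψs0 hψsr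
    have hdrnn : (0:ℝ) ≤ (r / ψ sη) ^ d₁ := Real.rpow_nonneg (le_of_lt (div_pos hr0 hψs0)) _
    have hKρnn : (0:ℝ) ≤ (Kη * ρ) ^ d₁ := Real.rpow_nonneg (by positivity) _
    have hexpnn : (0:ℝ) ≤ C * Real.exp (-(θ * lam * sη)) :=
      mul_nonneg hC0.le (Real.exp_pos _).le
    have hAnn : (0:ℝ) ≤ Cμ * (Kη * ρ) ^ d₁ * c₂ * (C * Real.exp (-(θ * lam * sη))) :=
      mul_nonneg (mul_nonneg (mul_nonneg (by linarith) hKρnn) hc₂0.le) hexpnn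
    have hnear2 : ∫⁻ z in D ∩ ball x r, pD T x z ∂μ
        ≤ ENNReal.ofReal (Real.exp (-(lam * (T - sη)))) *
          (ENNReal.ofReal (Cμ * (Kη * ρ) ^ d₁ * c₂ *
            (C * Real.exp (-(θ * lam * sη))))) ^ ((1:ℝ)/2) := by
      calc ∫⁻ z in D ∩ ball x r, pD T x z ∂μ
          ≤ (μ (ball x r)) ^ ((1:ℝ)/2) * (∫⁻ y in D, pD T x y ^ (2:ℝ) ∂μ) ^ ((1:ℝ)/2) := hnear
        _ ≤ (μ (ball x r)) ^ ((1:ℝ)/2) *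
            (ENNReal.ofReal (Real.exp (-(lam * (T - sη)))) *
              (∫⁻ y in D, pD sη x y ^ (2:ℝ) ∂μ) ^ ((1:ℝ)/2)) := mul_le_mul_right hcon _
        _ = ENNReal.ofReal (Real.exp (-(lam * (T - sη)))) *
            ((μ (ball x r)) ^ ((1:ℝ)/2) *
              (∫⁻ y in D, pD sη x y ^ (2:ℝ) ∂μ) ^ ((1:ℝ)/2)) := by ring
        _ = ENNReal.ofReal (Real.exp (-(lam * (T - sη)))) *
            (μ (ball x r) * ∫⁻ y in D, pD sη x y ^ (2:ℝ) ∂μ) ^ ((1:ℝ)/2) := by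
            rw [ENNReal.mul_rpow_of_nonneg _ _ (by norm_num : (0:ℝ) ≤ 1/2)]
        _ ≤ _ := ?_
      refine mul_le_mul_right (ENNReal.rpow_le_rpow ?_ (by norm_num : (0:ℝ) ≤ 1/2)) _
      calc μ (ball x r) * ∫⁻ y in D, pD sη x y ^ (2:ℝ) ∂μ
          ≤ (ENNReal.ofReal (Cμ * (r / ψ sη) ^ d₁) * μBs) *
            ((ENNReal.ofReal c₂ * μBs⁻¹) * ENNReal.ofReal (C * Real.exp (-(θ * lam * sη)))) :=
            mul_le_mul' hVD1 hNs2
        _ = (μBs * μBs⁻¹) * (ENNReal.ofReal (Cμ * (r / ψ sη) ^ d₁) * ENNReal.ofReal c₂ *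
            ENNReal.ofReal (C * Real.exp (-(θ * lam * sη)))) := by ring
        _ = ENNReal.ofReal (Cμ * (r / ψ sη) ^ d₁) * ENNReal.ofReal c₂ *
            ENNReal.ofReal (C * Real.exp (-(θ * lam * sη))) := by
            rw [ENNReal.mul_inv_cancel hμBs0 hμBstop, one_mul]
        _ = ENNReal.ofReal (Cμ * (r / ψ sη) ^ d₁ * c₂ * (C * Real.exp (-(θ * lam * sη)))) := by
            rw [← ENNReal.ofReal_mul (mul_nonneg (by linarith) hdrnn),
              ← ENNReal.ofReal_mul (mul_nonneg (mul_nonneg (by linarith) hdrnn) hc₂0.le)]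
        _ ≤ ENNReal.ofReal (Cμ * (Kη * ρ) ^ d₁ * c₂ * (C * Real.exp (-(θ * lam * sη)))) := by
            apply ENNReal.ofReal_le_ofReal
            have hdr : (r / ψ sη) ^ d₁ ≤ (Kη * ρ) ^ d₁ :=
              Real.rpow_le_rpow (le_of_lt (div_pos hr0 hψs0)) hrψs hd₁.le
            have h7 : Cμ * (r / ψ sη) ^ d₁ ≤ Cμ * (Kη * ρ) ^ d₁ :=
              mul_le_mul_of_nonneg_left hdr (by linarith)
            have h8 : Cμ * (r / ψ sη) ^ d₁ * c₂ ≤ Cμ * (Kη * ρ) ^ d₁ * c₂ :=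
              mul_le_mul_of_nonneg_right h7 hc₂0.le
            exact mul_le_mul_of_nonneg_right h8 hexpnn
    -- tail part
    set B : ℝ := (C * Real.exp (-(θ * lam * (T/2)))) * (c₂ * ((T/2) * (c₀ / φ (r/2)))) with hBdef
    have hBnn : (0:ℝ) ≤ B := by
      rw [hBdef]
      have h1 : (0:ℝ) ≤ c₀ / φ (r/2) := div_nonneg hc₀.le hφr2.le
      have h2 : (0:ℝ) ≤ (T/2) * (c₀ / φ (r/2)) := mul_nonneg (by linarith) h1
      exact mul_nonneg (mul_nonneg hC0.le (Real.exp_pos _).le) (mul_nonneg hc₂0.le h2)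
    have htailD : ∫⁻ z in D \ ball x r, pD T x z ∂μ
        ≤ ENNReal.ofReal B + ENNReal.ofReal B := by
      have hT2 : (0:ℝ) < T/2 := by positivity
      have hA : MeasurableSet (D \ ball x r) := hD.diff measurableSet_ball
      have h1 : ∫⁻ z in D \ ball x r, pD T x z ∂μ
          = ∫⁻ w in D, pD (T/2) x w * ∫⁻ z in D \ ball x r, pD (T/2) w z ∂μ ∂μ := by
        have h2 := hsplit (T/2) (T/2) hT2 hT2 x hx (D \ ball x r) hA diff_subset
        rwa [show T/2 + T/2 = T by ring] at h2
      rw [h1, ← lintegral_inter_add_diff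
        (fun w => pD (T/2) x w * ∫⁻ z in D \ ball x r, pD (T/2) w z ∂μ) D
        (show MeasurableSet (ball x (r/2)) from measurableSet_ball)]
      have htb : ENNReal.ofReal (c₂ * ((T/2) * (c₀ / φ (r/2)))) ≠ ∞ := ofReal_ne_top
      apply add_le_add
      · -- piece 1 : w close to x
        have hsub : ∀ w ∈ D ∩ ball x (r/2), D \ ball x r ⊆ (ball w (r/2))ᶜ := by
          intro w hw z hz
          simp only [mem_compl_iff, mem_ball]
          intro hlt
          have hw2 : dist w x < r/2 := mem_ball.mp hw.2
          have h3 : dist z x < r := by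
            have h4 := dist_triangle z w x
            linarith
          exact hz.2 (mem_ball.mpr h3)
        have hgA : ∀ w ∈ D ∩ ball x (r/2),
            (∫⁻ z in D \ ball x r, pD (T/2) w z ∂μ)
              ≤ ENNReal.ofReal (c₂ * ((T/2) * (c₀ / φ (r/2)))) :=
          fun w hw => htail₀ (T/2) hT2 w (r/2) hr20 _ (hsub w hw)
        calc ∫⁻ w in D ∩ ball x (r/2),
              pD (T/2) x w * (∫⁻ z in D \ ball x r, pD (T/2) w z ∂μ) ∂μ
            ≤ ∫⁻ w in D ∩ ball x (r/2),
                pD (T/2) x w * ENNReal.ofReal (c₂ * ((T/2) * (c₀ / φ (r/2)))) ∂μ :=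
              setLIntegral_mono' (hD.inter measurableSet_ball)
                (fun w hw => mul_le_mul_right (hgA w hw) _)
          _ = (∫⁻ w in D ∩ ball x (r/2), pD (T/2) x w ∂μ) *
                ENNReal.ofReal (c₂ * ((T/2) * (c₀ / φ (r/2)))) :=
              lintegral_mul_const' _ _ htb
          _ ≤ ENNReal.ofReal (C * Real.exp (-(θ * lam * (T/2)))) *
                ENNReal.ofReal (c₂ * ((T/2) * (c₀ / φ (r/2)))) := by
              apply mul_le_mul_left
              refine le_trans ?_ (Hu (T/2) hT2 x)
              exact lintegral_mono' (Measure.restrict_mono inter_subset_left le_rfl) le_rfl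
          _ = ENNReal.ofReal B := by
              rw [hBdef, ENNReal.ofReal_mul (mul_nonneg hC0.le (Real.exp_pos _).le)]
      · -- piece 2 : w far from x
        have hgA2 : ∀ w : M, (∫⁻ z in D \ ball x r, pD (T/2) w z ∂μ)
            ≤ ENNReal.ofReal (C * Real.exp (-(θ * lam * (T/2)))) := fun w =>
          le_trans (lintegral_mono' (Measure.restrict_mono diff_subset le_rfl) le_rfl)
            (Hu (T/2) hT2 w)
        calc ∫⁻ w in D \ ball x (r/2),
              pD (T/2) x w * (∫⁻ z in D \ ball x r, pD (T/2) w z ∂μ) ∂μ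
            ≤ ∫⁻ w in D \ ball x (r/2),
                pD (T/2) x w * ENNReal.ofReal (C * Real.exp (-(θ * lam * (T/2)))) ∂μ :=
              lintegral_mono fun w => mul_le_mul_right (hgA2 w) _
          _ = (∫⁻ w in D \ ball x (r/2), pD (T/2) x w ∂μ) *
                ENNReal.ofReal (C * Real.exp (-(θ * lam * (T/2)))) :=
              lintegral_mul_const' _ _ ofReal_ne_top
          _ ≤ ENNReal.ofReal (c₂ * ((T/2) * (c₀ / φ (r/2)))) *
                ENNReal.ofReal (C * Real.exp (-(θ * lam * (T/2)))) := by
              apply mul_le_mul_left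
              exact htail₀ (T/2) hT2 x (r/2) hr20 _ (fun z hz => hz.2)
          _ = ENNReal.ofReal B := by
              rw [hBdef, ← ENNReal.ofReal_mul (by positivity), mul_comm]
    -- real-number estimates
    have hexp1 : Real.exp (-(lam * (T - sη))) *
        (Cμ * (Kη * ρ) ^ d₁ * c₂ * (C * Real.exp (-(θ * lam * sη)))) ^ ((1:ℝ)/2)
        = (Cμ * Kη ^ d₁ * c₂ * C) ^ ((1:ℝ)/2) * Real.exp (-E) := by
      have hKρ : (Kη * ρ) ^ d₁ = Kη ^ d₁ * Real.exp (γ * lam * T * d₁) := by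
        rw [Real.mul_rpow hKη0.le hρ0.le, hρdef, real_exp_rpow]
      rw [hKρ]
      have hAA : Cμ * (Kη ^ d₁ * Real.exp (γ * lam * T * d₁)) * c₂ *
          (C * Real.exp (-(θ * lam * sη)))
          = (Cμ * Kη ^ d₁ * c₂ * C) * Real.exp (γ * lam * T * d₁ + -(θ * lam * sη)) := by
        rw [Real.exp_add]; ring
      rw [hAA, Real.mul_rpow (by positivity) (Real.exp_pos _).le, real_exp_rpow]
      rw [show Real.exp (-(lam * (T - sη))) * ((Cμ * Kη ^ d₁ * c₂ * C) ^ ((1:ℝ)/2) *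
            Real.exp ((γ * lam * T * d₁ + -(θ * lam * sη)) * ((1:ℝ)/2)))
          = (Cμ * Kη ^ d₁ * c₂ * C) ^ ((1:ℝ)/2) *
            (Real.exp (-(lam * (T - sη))) *
              Real.exp ((γ * lam * T * d₁ + -(θ * lam * sη)) * ((1:ℝ)/2))) from by ring]
      rw [← Real.exp_add]
      have hγs : γ * (α₁ + d₁/2) = (1-η)*(1-θ/2) := by
        rw [hγdef, hs₀def]; field_simp
      have harg : (-(lam * (T - sη)) + (γ * lam * T * d₁ + -(θ * lam * sη)) * ((1:ℝ)/2)) = -E := by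
        rw [hEdef, hGθdef, hsηdef]
        linear_combination lam * T * hγs
      rw [harg]
    have hexp2 : B + B ≤ (C * c₂ * c₀ * M' * 2 ^ α₂) * Real.exp (-E) := by
      have h1 : (T/2) * (c₀ / φ (r/2)) ≤ (c₀/2) * (M' * 2 ^ α₂ * ρ ^ (-α₁)) := by
        have h2 : (T/2) * (c₀ / φ (r/2)) = (c₀/2) * (T / φ (r/2)) := by ring
        rw [h2]
        exact mul_le_mul_of_nonneg_left hTphi (by positivity)
      have h3 : Real.exp (-(θ * lam * (T/2))) * ρ ^ (-α₁) = Real.exp (-E) := by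
        rw [hρα, ← Real.exp_add, hEdef, hGθdef]
        congr 1
        ring
      calc B + B = 2 * (C * Real.exp (-(θ * lam * (T/2)))) * c₂ * ((T/2) * (c₀ / φ (r/2))) := by
            rw [hBdef]; ring
        _ ≤ 2 * (C * Real.exp (-(θ * lam * (T/2)))) * c₂ *
              ((c₀/2) * (M' * 2 ^ α₂ * ρ ^ (-α₁))) := by
            apply mul_le_mul_of_nonneg_left h1
            positivity
        _ = (C * c₂ * c₀ * M' * 2 ^ α₂) * (Real.exp (-(θ * lam * (T/2))) * ρ ^ (-α₁)) := by
            ring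
        _ = (C * c₂ * c₀ * M' * 2 ^ α₂) * Real.exp (-E) := by rw [h3]
    have hconst : (Cμ * Kη ^ d₁ * c₂ * C) ^ ((1:ℝ)/2) + C * c₂ * c₀ * M' * 2 ^ α₂
        ≤ K₁ * C := by
      have hKd : (0:ℝ) ≤ Kη ^ d₁ := Real.rpow_nonneg hKη0.le _
      have h1 : (Cμ * Kη ^ d₁ * c₂ * C) ^ ((1:ℝ)/2)
          = (Cμ * Kη ^ d₁ * c₂) ^ ((1:ℝ)/2) * C ^ ((1:ℝ)/2) := by
        rw [← Real.mul_rpow (by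
          exact mul_nonneg (mul_nonneg (by linarith) hKd) hc₂0.le) hC0.le]
      have h2 : C ^ ((1:ℝ)/2) ≤ C := by
        have h5 := Real.rpow_le_rpow_of_exponent_le hC (show (1:ℝ)/2 ≤ 1 by norm_num)
        rwa [Real.rpow_one] at h5
      have h3 : (Cμ * Kη ^ d₁ * c₂) ^ ((1:ℝ)/2) ≤ (Cμ * Kη ^ d₁ * max c₂ 1) ^ ((1:ℝ)/2) := by
        apply Real.rpow_le_rpow (mul_nonneg (mul_nonneg (by linarith) hKd) hc₂0.le)
        · exact mul_le_mul_of_nonneg_left (le_max_left _ _)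
            (mul_nonneg (by linarith) hKd)
        · norm_num
      have h5 : (Cμ * Kη ^ d₁ * c₂) ^ ((1:ℝ)/2) * C ^ ((1:ℝ)/2)
          ≤ (Cμ * Kη ^ d₁ * max c₂ 1) ^ ((1:ℝ)/2) * C :=
        mul_le_mul h3 h2 (Real.rpow_nonneg hC0.le _)
          (Real.rpow_nonneg (by
            exact mul_nonneg (mul_nonneg (by linarith) hKd)
              (le_trans zero_le_one (le_max_right _ _))) _)
      have h4 : (Cμ * Kη ^ d₁ * max c₂ 1) ^ ((1:ℝ)/2) + c₂ * c₀ * M' * 2 ^ α₂ ≤ K₁ :=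
        le_max_right _ _
      calc (Cμ * Kη ^ d₁ * c₂ * C) ^ ((1:ℝ)/2) + C * c₂ * c₀ * M' * 2 ^ α₂
          = (Cμ * Kη ^ d₁ * c₂) ^ ((1:ℝ)/2) * C ^ ((1:ℝ)/2) + C * c₂ * c₀ * M' * 2 ^ α₂ := by
            rw [h1]
        _ ≤ (Cμ * Kη ^ d₁ * max c₂ 1) ^ ((1:ℝ)/2) * C + C * c₂ * c₀ * M' * 2 ^ α₂ := by
            linarith
        _ = ((Cμ * Kη ^ d₁ * max c₂ 1) ^ ((1:ℝ)/2) + c₂ * c₀ * M' * 2 ^ α₂) * C := by ring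
        _ ≤ K₁ * C := mul_le_mul_of_nonneg_right h4 hC0.le
    -- final assembly
    calc ∫⁻ z in D, pD T x z ∂μ
        = ∫⁻ z in D ∩ ball x r, pD T x z ∂μ + ∫⁻ z in D \ ball x r, pD T x z ∂μ :=
          (lintegral_inter_add_diff _ D measurableSet_ball).symm
      _ ≤ ENNReal.ofReal (Real.exp (-(lam * (T - sη)))) *
            (ENNReal.ofReal (Cμ * (Kη * ρ) ^ d₁ * c₂ *
              (C * Real.exp (-(θ * lam * sη))))) ^ ((1:ℝ)/2)
          + (ENNReal.ofReal B + ENNReal.ofReal B) := add_le_add hnear2 htailD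
      _ = ENNReal.ofReal (Real.exp (-(lam * (T - sη))) *
            (Cμ * (Kη * ρ) ^ d₁ * c₂ * (C * Real.exp (-(θ * lam * sη)))) ^ ((1:ℝ)/2))
          + ENNReal.ofReal (B + B) := by
          rw [ENNReal.ofReal_rpow_of_nonneg hAnn (by norm_num : (0:ℝ) ≤ 1/2),
            ← ENNReal.ofReal_mul (Real.exp_pos _).le, ENNReal.ofReal_add hBnn hBnn]
      _ ≤ ENNReal.ofReal (K₁ * C * Real.exp (-E)) := by
          rw [← ENNReal.ofReal_add (by positivity) (by linarith)]
          apply ENNReal.ofReal_le_ofReal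
          rw [hexp1]
          have h9 : ((Cμ * Kη ^ d₁ * c₂ * C) ^ ((1:ℝ)/2) + C * c₂ * c₀ * M' * 2 ^ α₂) *
              Real.exp (-E) ≤ (K₁ * C) * Real.exp (-E) :=
            mul_le_mul_of_nonneg_right hconst (Real.exp_pos _).le
          rw [add_mul] at h9
          linarith [hexp2, h9]
      _ = ENNReal.ofReal (K₁ * C * Real.exp
            (-((θ/2 + α₁ * ((1-η)*(1-θ/2)/s₀)) * lam * T))) := by
          rw [hEdef, hGθdef, hγdef]
  -- the iteration
  have main : ∀ n : ℕ, ∀ t, 0 < t → ∀ x, ∫⁻ z in D, pD t x z ∂μ ≤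
      ENNReal.ofReal (K₁ ^ n * Real.exp (-(θstar * (1 - q ^ n) * lam * t))) := by
    intro n
    induction n with
    | zero =>
      intro t ht x
      have h1 : K₁ ^ 0 * Real.exp (-(θstar * (1 - q ^ 0) * lam * t)) = 1 := by
        norm_num
      rw [h1, ENNReal.ofReal_one]
      exact humass t ht x
    | succ n ih =>
      have hqn1 : q ^ n ≤ 1 := pow_le_one₀ hq0.le hq1.le
      have hθn0 : 0 ≤ θstar * (1 - q ^ n) :=
        mul_nonneg hθstar0.le (sub_nonneg.mpr hqn1)
      have hθn1 : θstar * (1 - q ^ n) < 1 := by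
        have h1 : 1 - q ^ n < 1 := sub_lt_self 1 (pow_pos hq0 n)
        calc θstar * (1 - q ^ n) ≤ 1 * (1 - q ^ n) :=
              mul_le_mul_of_nonneg_right hθstar1.le (sub_nonneg.mpr hqn1)
          _ = 1 - q ^ n := one_mul _
          _ < 1 := h1
      have hC1 : 1 ≤ K₁ ^ n := one_le_pow₀ hK₁1
      have h := step (θstar * (1 - q ^ n)) (K₁ ^ n) hθn0 hθn1 hC1 ih
      intro t ht x
      have hb2 : b = 1 - 2*q := by rw [hqdef]; ring
      have hfix : θstar * (1 - q) = 1 - 2*q := by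
        have h1 : (1:ℝ)+b ≠ 0 := by positivity
        rw [← hb2, hqdef, hθstardef]; field_simp; ring
      have e1 : α₁*((1-η)*(1-θstar*(1-q^n)/2)/s₀) = b*(1-θstar*(1-q^n)/2) := by
        rw [hbdef]; field_simp
      have hGid : θstar * (1 - q ^ n) / 2 + α₁ * ((1-η)*(1-θstar * (1 - q ^ n)/2)/s₀)
          = θstar * (1 - q ^ (n+1)) := by
        rw [e1, hb2, pow_succ]
        linear_combination -hfix
      have h2 := h t ht x
      rw [hGid] at h2
      refine h2.trans (ENNReal.ofReal_le_ofReal (le_of_eq ?_))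
      rw [pow_succ]
      ring
  -- conclusion
  intro t ht x hx
  refine (main N t ht x).trans (ofReal_le_ofReal ?_)
  have h1 : Real.exp (-(θstar * (1 - q ^ N) * lam * t))
      ≤ Real.exp (-((1 - ε) / (1 + d₁ / (4 * α₁)) * lam * t)) := by
    apply Real.exp_le_exp.mpr
    have h2 : κ * lam * t ≤ θstar * (1 - q ^ N) * lam * t := by
      have := mul_le_mul_of_nonneg_right (mul_le_mul_of_nonneg_right hθN hlam.le) ht.le
      linarith
    rw [hκdef] at h2
    linarith
  calc K₁ ^ N * Real.exp (-(θstar * (1 - q ^ N) * lam * t))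
      ≤ K₁ ^ N * Real.exp (-((1 - ε) / (1 + d₁ / (4 * α₁)) * lam * t)) := by
        apply mul_le_mul_of_nonneg_left h1 (by positivity)
    _ = K₁ ^ N * Real.exp (-((1 - ε) / (1 + d₁ / (4 * α₁))) * lam * t) := by ring_nf
end

section
/- Let (M,d) be a metric space with a Borel measure μ, let D ⊆ M, and let p_D : (0,∞) × D × D → ℝ be continuous and strictly positive, satisfying the Chapman–Kolmogorov identity p_D(s+t,x,y) = ∫_D p_D(s,x,z) p_D(t,z,y) dμ(z) for all s,t > 0 and x,y ∈ D. Let f : M → ℝ be continuous and nonnegative, with nonempty compact support contained in D. Then for every x ∈ D and all t, T > 0, the infimum m := inf_{z ∈ supp f} p_D(T,x,z) is strictly positive and ∫_D ∫_D f(y) f(z) p_D(t,z,y) dμ(z) dμ(y) ≤ ( (sup_{M} f)² / m ) · ∫_D p_D(t+T,x,y) dμ(y). -/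
open MeasureTheory Metric Set ENNReal

lemma aux_ae_nonneg {M : Type*} [MeasurableSpace M] (μ : Measure M) (D : Set M) (g : M → ℝ)
    (hg : AEStronglyMeasurable g (μ.restrict D)) (h0 : ∀ z ∈ D, 0 ≤ g z) :
    0 ≤ᵐ[μ.restrict D] g := by
  obtain ⟨m, hm, hgm⟩ := hg
  have hE : μ.restrict D {z | ¬ g z = m z} = 0 := ae_iff.mp hgm
  have hmset : MeasurableSet {z | m z < 0} := measurableSet_lt hm.measurable measurable_const
  have h1 : μ.restrict D {z | m z < 0} = 0 := by
    rw [Measure.restrict_apply hmset]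
    refine le_antisymm ?_ zero_le
    calc μ ({z | m z < 0} ∩ D) = μ (({z | m z < 0} ∩ D) ∩ D) := by
          rw [inter_assoc, inter_self]
      _ ≤ μ.restrict D ({z | m z < 0} ∩ D) := Measure.le_restrict_apply _ _
      _ ≤ μ.restrict D {z | ¬ g z = m z} := by
          refine measure_mono ?_
          rintro z ⟨hz1, hz2⟩
          simp only [mem_setOf_eq] at hz1 ⊢
          intro heq
          have := h0 z hz2
          linarith
      _ = 0 := hE
  have hm0 : ∀ᵐ z ∂(μ.restrict D), 0 ≤ m z := by
    refine ae_iff.mpr ?_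
    simpa [not_le] using h1
  filter_upwards [hm0, hgm] with z h1 h2
  rw [Pi.zero_apply]
  rw [h2]
  exact h1

/-- Lemma 4.1 of the paper: for a continuous strictly positive Dirichlet heat kernel
satisfying Chapman–Kolmogorov and a nonnegative continuous `f` with nonempty compact
support contained in `D`, the pairing `(P_t^D f, f)` is controlled by
`(sup f)² / inf_{supp f} p_D(T, x, ·)` times the survival probability at time `t + T`. -/
theorem stmt11
    {M : Type*} [MetricSpace M] [MeasurableSpace M] [BorelSpace M] (μ : Measure M)
    (D : Set M) (pD : ℝ → M → M → ℝ)
    (hcont : ContinuousOn (fun q : ℝ × M × M => pD q.1 q.2.1 q.2.2)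
      (Set.Ioi (0:ℝ) ×ˢ D ×ˢ D))
    (hpos : ∀ t : ℝ, 0 < t → ∀ x ∈ D, ∀ y ∈ D, 0 < pD t x y)
    (hCK : ∀ s t : ℝ, 0 < s → 0 < t → ∀ x ∈ D, ∀ y ∈ D,
      pD (s + t) x y = ∫ z in D, pD s x z * pD t z y ∂μ)
    (f : M → ℝ) (hf : Continuous f) (hf0 : ∀ x : M, 0 ≤ f x)
    (hfc : HasCompactSupport f) (hfne : (tsupport f).Nonempty) (hfD : tsupport f ⊆ D) :
    ∀ x₀ ∈ D, ∀ t T : ℝ, 0 < t → 0 < T →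
      0 < sInf ((fun z => pD T x₀ z) '' tsupport f) ∧
      (∫⁻ y in D, ∫⁻ z in D, ENNReal.ofReal (f y * f z * pD t z y) ∂μ ∂μ) ≤
        ENNReal.ofReal ((⨆ x : M, f x) ^ 2 / sInf ((fun z => pD T x₀ z) '' tsupport f)) *
          ∫⁻ y in D, ENNReal.ofReal (pD (t + T) x₀ y) ∂μ := by
  intro x₀ hx₀ t T ht hT
  set K := tsupport f with hKdef
  have hKco : IsCompact K := hfc
  have hKm : MeasurableSet K := (isClosed_tsupport f).measurableSet
  have hcontK : ContinuousOn (fun z => pD T x₀ z) D := by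
    have hc2 : ContinuousOn (fun z : M => ((T, x₀, z) : ℝ × M × M)) D :=
      (continuous_const.prodMk (continuous_const.prodMk continuous_id)).continuousOn
    exact hcont.comp hc2 (fun z hz => ⟨hT, hx₀, hz⟩)
  have himg : IsCompact ((fun z => pD T x₀ z) '' K) :=
    hKco.image_of_continuousOn (hcontK.mono hfD)
  have himgne : ((fun z => pD T x₀ z) '' K).Nonempty := hfne.image _
  set m := sInf ((fun z => pD T x₀ z) '' K) with hmdef
  obtain ⟨z₀, hz₀K, hz₀⟩ := himg.sInf_mem himgne
  have hmpos : 0 < m := by rw [hmdef, ← hz₀]; exact hpos T hT x₀ hx₀ z₀ (hfD hz₀K)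
  refine ⟨hmpos, ?_⟩
  set S := ⨆ x : M, f x with hSdef
  have hbdd : BddAbove (Set.range f) := hf.bddAbove_range_of_hasCompactSupport hfc
  have hfS : ∀ y : M, f y ≤ S := fun y => le_ciSup hbdd y
  have hS0 : 0 ≤ S := le_trans (hf0 z₀) (hfS z₀)
  set C := S ^ 2 / m with hCdef
  have hC0 : 0 ≤ C := div_nonneg (sq_nonneg S) hmpos.le
  have hres : (μ.restrict D).restrict K = μ.restrict K := by
    rw [Measure.restrict_restrict hKm, inter_eq_self_of_subset_left hfD]
  have key : ∀ y ∈ K, (∫⁻ z in D, ENNReal.ofReal (f y * f z * pD t z y) ∂μ) ≤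
      ENNReal.ofReal C * ENNReal.ofReal (pD (t + T) x₀ y) := by
    intro y hyK
    have hyD : y ∈ D := hfD hyK
    have hCK' : pD (T + t) x₀ y = ∫ z in D, pD T x₀ z * pD t z y ∂μ :=
      hCK T t hT ht x₀ hx₀ y hyD
    have hPpos : 0 < pD (T + t) x₀ y := hpos (T + t) (by linarith) x₀ hx₀ y hyD
    set g : M → ℝ := fun z => pD T x₀ z * pD t z y with hgdef
    have hgint : Integrable g (μ.restrict D) := by
      by_contra h
      rw [integral_undef h] at hCK'
      linarith
    have hgnn : ∀ z ∈ D, 0 ≤ g z := fun z hz =>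
      mul_nonneg (hpos T hT x₀ hx₀ z hz).le (hpos t ht z hz y hyD).le
    have hgae := aux_ae_nonneg μ D g hgint.aestronglyMeasurable hgnn
    have heq : ENNReal.ofReal (pD (T + t) x₀ y) = ∫⁻ z in D, ENNReal.ofReal (g z) ∂μ := by
      rw [hCK', ofReal_integral_eq_lintegral_ofReal hgint hgae]
    have hstep1 : (∫⁻ z in D, ENNReal.ofReal (f y * f z * pD t z y) ∂μ)
        = ∫⁻ z in K, ENNReal.ofReal (f y * f z * pD t z y) ∂μ := by
      calc (∫⁻ z in D, ENNReal.ofReal (f y * f z * pD t z y) ∂μ)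
          = ∫⁻ z, K.indicator (fun z => ENNReal.ofReal (f y * f z * pD t z y)) z
              ∂(μ.restrict D) := by
            refine lintegral_congr (fun z => ?_)
            by_cases hz : z ∈ K
            · rw [indicator_of_mem hz]
            · have hfz : f z = 0 := image_eq_zero_of_notMem_tsupport hz
              rw [indicator_of_notMem hz, hfz]
              simp
        _ = ∫⁻ z in K, ENNReal.ofReal (f y * f z * pD t z y) ∂(μ.restrict D) := by
            rw [lintegral_indicator hKm _]
        _ = ∫⁻ z in K, ENNReal.ofReal (f y * f z * pD t z y) ∂μ := by rw [hres]
    have hstep2 : (∫⁻ z in K, ENNReal.ofReal (f y * f z * pD t z y) ∂μ)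
        ≤ ∫⁻ z in K, ENNReal.ofReal C * ENNReal.ofReal (g z) ∂μ := by
      refine lintegral_mono_ae ?_
      filter_upwards [ae_restrict_mem hKm] with z hzK
      have hzD : z ∈ D := hfD hzK
      have hp : 0 < pD t z y := hpos t ht z hzD y hyD
      have hq : m ≤ pD T x₀ z := csInf_le himg.bddBelow ⟨z, hzK, rfl⟩
      have hSS : f y * f z ≤ S ^ 2 := by
        have h := mul_le_mul (hfS y) (hfS z) (hf0 z) hS0
        calc f y * f z ≤ S * S := h
          _ = S ^ 2 := (sq S).symm
      have hCm : C * m = S ^ 2 := div_mul_cancel₀ _ hmpos.ne'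
      have h1 : f y * f z * pD t z y ≤ C * g z := by
        have e1 : f y * f z * pD t z y ≤ S ^ 2 * pD t z y :=
          mul_le_mul_of_nonneg_right hSS hp.le
        have e2 : S ^ 2 * pD t z y = C * (m * pD t z y) := by rw [← hCm]; ring
        have e3 : C * (m * pD t z y) ≤ C * g z := by
          refine mul_le_mul_of_nonneg_left ?_ hC0
          exact mul_le_mul_of_nonneg_right hq hp.le
        linarith
      calc ENNReal.ofReal (f y * f z * pD t z y) ≤ ENNReal.ofReal (C * g z) :=
            ENNReal.ofReal_le_ofReal h1
        _ = ENNReal.ofReal C * ENNReal.ofReal (g z) := ENNReal.ofReal_mul hC0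
    have hstep3 : (∫⁻ z in K, ENNReal.ofReal C * ENNReal.ofReal (g z) ∂μ)
        = ENNReal.ofReal C * ∫⁻ z in K, ENNReal.ofReal (g z) ∂μ :=
      lintegral_const_mul' _ _ ENNReal.ofReal_ne_top
    have hstep4 : (∫⁻ z in K, ENNReal.ofReal (g z) ∂μ)
        ≤ ∫⁻ z in D, ENNReal.ofReal (g z) ∂μ :=
      lintegral_mono' (Measure.restrict_mono hfD le_rfl) le_rfl
    calc (∫⁻ z in D, ENNReal.ofReal (f y * f z * pD t z y) ∂μ)
        = ∫⁻ z in K, ENNReal.ofReal (f y * f z * pD t z y) ∂μ := hstep1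
      _ ≤ ∫⁻ z in K, ENNReal.ofReal C * ENNReal.ofReal (g z) ∂μ := hstep2
      _ = ENNReal.ofReal C * ∫⁻ z in K, ENNReal.ofReal (g z) ∂μ := hstep3
      _ ≤ ENNReal.ofReal C * ∫⁻ z in D, ENNReal.ofReal (g z) ∂μ :=
          mul_le_mul_right hstep4 _
      _ = ENNReal.ofReal C * ENNReal.ofReal (pD (T + t) x₀ y) := by rw [heq]
      _ = ENNReal.ofReal C * ENNReal.ofReal (pD (t + T) x₀ y) := by rw [add_comm T t]
  have main : ∀ y : M, (∫⁻ z in D, ENNReal.ofReal (f y * f z * pD t z y) ∂μ) ≤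
      ENNReal.ofReal C * K.indicator (fun y => ENNReal.ofReal (pD (t + T) x₀ y)) y := by
    intro y
    by_cases hy : y ∈ K
    · rw [indicator_of_mem hy]
      exact key y hy
    · have hfy : f y = 0 := image_eq_zero_of_notMem_tsupport hy
      simp [hfy]
  calc (∫⁻ y in D, ∫⁻ z in D, ENNReal.ofReal (f y * f z * pD t z y) ∂μ ∂μ)
      ≤ ∫⁻ y in D, ENNReal.ofReal C *
          K.indicator (fun y => ENNReal.ofReal (pD (t + T) x₀ y)) y ∂μ :=
        lintegral_mono main
    _ = ENNReal.ofReal C *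
          ∫⁻ y in D, K.indicator (fun y => ENNReal.ofReal (pD (t + T) x₀ y)) y ∂μ :=
        lintegral_const_mul' _ _ ENNReal.ofReal_ne_top
    _ = ENNReal.ofReal C * ∫⁻ y in K, ENNReal.ofReal (pD (t + T) x₀ y) ∂μ := by
        rw [lintegral_indicator hKm _, hres]
    _ ≤ ENNReal.ofReal C * ∫⁻ y in D, ENNReal.ofReal (pD (t + T) x₀ y) ∂μ :=
        mul_le_mul_right (lintegral_mono' (Measure.restrict_mono hfD le_rfl) le_rfl) _
end
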